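/- arXiv:2206.04437 — 6 statements merged into one kernel-verified Lean document; each statement's English description precedes it below -/
import Mathlib

section
/- An m×n rectangle can be tiled by k×1 tiles (placed horizontally or vertically) if and only if k divides m or k divides n. -/
/-- The cells of an `m × n` rectangle: `(row, column)` with `row < m`, `column < n`. -/
def grid (m n : ℕ) : Finset (ℕ × ℕ) := Finset.range m ×ˢ Finset.range n

/-- A horizontal `k × 1` tile: `k` consecutive cells in one row. -/
def IsHTile (k : ℕ) (t : Finset (ℕ × ℕ)) : Prop :=
  ∃ i j : ℕ, t = (Finset.range k).image fun s => (i, j + s)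

/-- A vertical `k × 1` tile: `k` consecutive cells in one column. -/
def IsVTile (k : ℕ) (t : Finset (ℕ × ℕ)) : Prop :=
  ∃ i j : ℕ, t = (Finset.range k).image fun s => (i + s, j)

/-- A tiling of the `m × n` rectangle by `k × 1` tiles. -/
def IsTiling (m n k : ℕ) (T : Finset (Finset (ℕ × ℕ))) : Prop :=
  (∀ t ∈ T, IsHTile k t ∨ IsVTile k t) ∧
  (T : Set (Finset (ℕ × ℕ))).PairwiseDisjoint id ∧
  T.biUnion id = grid m n

/-- The number of tilings of the `m × n` rectangle by `k × 1` tiles. -/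
noncomputable def numTilings (m n k : ℕ) : ℕ :=
  Nat.card {T : Finset (Finset (ℕ × ℕ)) // IsTiling m n k T}

/-- The tiling `T` has a fault at `x = a`: every tile lies entirely in
columns `< a` or entirely in columns `≥ a`. -/
def HasFaultAt (T : Finset (Finset (ℕ × ℕ))) (a : ℕ) : Prop :=
  ∀ t ∈ T, (∀ c ∈ t, c.2 < a) ∨ (∀ c ∈ t, a ≤ c.2)

/-- A tiling of a rectangle with `n` columns is fault-free. -/
def FaultFree (n : ℕ) (T : Finset (Finset (ℕ × ℕ))) : Prop :=
  ∀ a : ℕ, 0 < a → a < n → ¬ HasFaultAt T a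

/-- The number of fault-free tilings of the `m × n` rectangle by `k × 1` tiles. -/
noncomputable def numFFTilings (m n k : ℕ) : ℕ :=
  Nat.card {T : Finset (Finset (ℕ × ℕ)) // IsTiling m n k T ∧ FaultFree n T}

lemma vtiling_exists (m n k : ℕ) (hk : 0 < k) (h : k ∣ m) :
    ∃ T : Finset (Finset (ℕ × ℕ)), IsTiling m n k T := by
  refine ⟨((Finset.range (m / k)) ×ˢ Finset.range n).image
    (fun p => (Finset.range k).image fun s => (p.1 * k + s, p.2)), ?_, ?_, ?_⟩
  · intro t ht
    simp only [Finset.mem_image] at ht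
    obtain ⟨p, -, rfl⟩ := ht
    exact Or.inr ⟨p.1 * k, p.2, rfl⟩
  · intro t ht t' ht' hne
    simp only [Finset.coe_image, Set.mem_image] at ht ht'
    obtain ⟨⟨a, j⟩, -, rfl⟩ := ht
    obtain ⟨⟨a', j'⟩, -, rfl⟩ := ht'
    simp only [Function.onFun, id]
    rw [Finset.disjoint_left]
    rintro ⟨x, y⟩ hx hx'
    simp only [Finset.mem_image, Finset.mem_range, Prod.mk.injEq] at hx hx'
    obtain ⟨s, hs, hxs, rfl⟩ := hx
    obtain ⟨s', hs', hxs', rfl⟩ := hx'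
    have hdiv : a = a' := by
      have h1 : (a * k + s) / k = a := by
        rw [mul_comm, Nat.mul_add_div hk, Nat.div_eq_of_lt hs, add_zero]
      have h2 : (a' * k + s') / k = a' := by
        rw [mul_comm, Nat.mul_add_div hk, Nat.div_eq_of_lt hs', add_zero]
      rw [← h1, ← h2, hxs, hxs']
    apply hne
    subst hdiv
    rfl
  · ext ⟨x, y⟩
    simp only [Finset.mem_biUnion, Finset.mem_image, Finset.mem_product, Finset.mem_range,
      grid, id, Prod.exists]
    constructor
    · rintro ⟨t, ⟨a, j, ⟨ha, hj⟩, rfl⟩, hx⟩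
      simp only [Finset.mem_image, Finset.mem_range, Prod.mk.injEq] at hx
      obtain ⟨s, hs, hxs, rfl⟩ := hx
      refine ⟨?_, hj⟩
      have : (a + 1) * k ≤ (m / k) * k := Nat.mul_le_mul_right k ha
      rw [Nat.div_mul_cancel h] at this
      have : a * k + s < (a + 1) * k := by rw [add_mul, one_mul]; omega
      omega
    · rintro ⟨hx, hy⟩
      refine ⟨_, ⟨x / k, y, ⟨?_, hy⟩, rfl⟩, ?_⟩
      · exact Nat.div_lt_div_of_lt_of_dvd h hx
      · simp only [Finset.mem_image, Finset.mem_range, Prod.mk.injEq]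
        exact ⟨x % k, Nat.mod_lt _ hk, by have := Nat.mod_add_div' x k; omega, trivial⟩

lemma htiling_exists (m n k : ℕ) (hk : 0 < k) (h : k ∣ n) :
    ∃ T : Finset (Finset (ℕ × ℕ)), IsTiling m n k T := by
  refine ⟨((Finset.range m) ×ˢ Finset.range (n / k)).image
    (fun p => (Finset.range k).image fun s => (p.1, p.2 * k + s)), ?_, ?_, ?_⟩
  · intro t ht
    simp only [Finset.mem_image] at ht
    obtain ⟨p, -, rfl⟩ := ht
    exact Or.inl ⟨p.1, p.2 * k, rfl⟩
  · intro t ht t' ht' hne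
    simp only [Finset.coe_image, Set.mem_image] at ht ht'
    obtain ⟨⟨i, a⟩, -, rfl⟩ := ht
    obtain ⟨⟨i', a'⟩, -, rfl⟩ := ht'
    simp only [Function.onFun, id]
    rw [Finset.disjoint_left]
    rintro ⟨x, y⟩ hx hx'
    simp only [Finset.mem_image, Finset.mem_range, Prod.mk.injEq] at hx hx'
    obtain ⟨s, hs, rfl, hys⟩ := hx
    obtain ⟨s', hs', hi, hys'⟩ := hx'
    have hdiv : a = a' := by
      have h1 : (a * k + s) / k = a := by
        rw [mul_comm, Nat.mul_add_div hk, Nat.div_eq_of_lt hs, add_zero]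
      have h2 : (a' * k + s') / k = a' := by
        rw [mul_comm, Nat.mul_add_div hk, Nat.div_eq_of_lt hs', add_zero]
      rw [← h1, ← h2, hys, hys']
    apply hne
    subst hdiv hi
    rfl
  · ext ⟨x, y⟩
    simp only [Finset.mem_biUnion, Finset.mem_image, Finset.mem_product, Finset.mem_range,
      grid, id, Prod.exists]
    constructor
    · rintro ⟨t, ⟨i, a, ⟨hi, ha⟩, rfl⟩, hx⟩
      simp only [Finset.mem_image, Finset.mem_range, Prod.mk.injEq] at hx
      obtain ⟨s, hs, rfl, hys⟩ := hx
      refine ⟨hi, ?_⟩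
      have : (a + 1) * k ≤ (n / k) * k := Nat.mul_le_mul_right k ha
      rw [Nat.div_mul_cancel h] at this
      have : a * k + s < (a + 1) * k := by rw [add_mul, one_mul]; omega
      omega
    · rintro ⟨hx, hy⟩
      refine ⟨_, ⟨x, y / k, ⟨hx, ?_⟩, rfl⟩, ?_⟩
      · exact Nat.div_lt_div_of_lt_of_dvd h hy
      · simp only [Finset.mem_image, Finset.mem_range, Prod.mk.injEq]
        exact ⟨y % k, Nat.mod_lt _ hk, trivial, by have := Nat.mod_add_div' y k; omega⟩

theorem stmt_0 (m n k : ℕ) (hm : 0 < m) (hn : 0 < n) (hk : 0 < k) :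
    (∃ T : Finset (Finset (ℕ × ℕ)), IsTiling m n k T) ↔ (k ∣ m ∨ k ∣ n) := by
  constructor
  · rintro ⟨T, hT, hdisj, hcover⟩
    rcases eq_or_lt_of_le (show 1 ≤ k from hk) with h1 | h1
    · left; rw [← h1]; exact one_dvd m
    set ω : ℂ := Complex.exp (2 * Real.pi * Complex.I / k) with hω
    have hprim : IsPrimitiveRoot ω k := Complex.isPrimitiveRoot_exp k (by omega)
    have hne1 : ω ≠ 1 := hprim.ne_one h1
    have hgeom : ∑ s ∈ Finset.range k, ω ^ s = 0 := hprim.geom_sum_eq_zero h1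
    -- each tile sums to zero
    have htile : ∀ t ∈ T, ∑ c ∈ t, ω ^ (c.1 + c.2) = 0 := by
      intro t ht
      rcases hT t ht with ⟨i, j, rfl⟩ | ⟨i, j, rfl⟩
      · rw [Finset.sum_image (by intro a _ b _ hab; simpa using hab)]
        calc ∑ s ∈ Finset.range k, ω ^ (i + (j + s))
            = ∑ s ∈ Finset.range k, ω ^ (i + j) * ω ^ s := by
              apply Finset.sum_congr rfl; intro s _; rw [← pow_add]; ring_nf
          _ = ω ^ (i + j) * ∑ s ∈ Finset.range k, ω ^ s := by rw [Finset.mul_sum]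
          _ = 0 := by rw [hgeom, mul_zero]
      · rw [Finset.sum_image (by intro a _ b _ hab; simpa using hab)]
        calc ∑ s ∈ Finset.range k, ω ^ (i + s + j)
            = ∑ s ∈ Finset.range k, ω ^ (i + j) * ω ^ s := by
              apply Finset.sum_congr rfl; intro s _; rw [← pow_add]; ring_nf
          _ = ω ^ (i + j) * ∑ s ∈ Finset.range k, ω ^ s := by rw [Finset.mul_sum]
          _ = 0 := by rw [hgeom, mul_zero]
    have hzero : ∑ c ∈ grid m n, ω ^ (c.1 + c.2) = 0 := by
      rw [← hcover, Finset.sum_biUnion hdisj]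
      exact Finset.sum_eq_zero htile
    have hprod : (∑ i ∈ Finset.range m, ω ^ i) * (∑ j ∈ Finset.range n, ω ^ j) = 0 := by
      rw [Finset.sum_mul_sum, ← hzero]
      rw [grid, Finset.sum_product]
      apply Finset.sum_congr rfl; intro i _
      apply Finset.sum_congr rfl; intro j _
      rw [← pow_add]
    rcases mul_eq_zero.mp hprod with h | h
    · left
      rw [geom_sum_eq hne1, div_eq_zero_iff] at h
      rcases h with h | h
      · rw [← hprim.pow_eq_one_iff_dvd]
        have := sub_eq_zero.mp h; linear_combination this
      · exact absurd (sub_eq_zero.mp h) hne1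
    · right
      rw [geom_sum_eq hne1, div_eq_zero_iff] at h
      rcases h with h | h
      · rw [← hprim.pow_eq_one_iff_dvd]
        have := sub_eq_zero.mp h; linear_combination this
      · exact absurd (sub_eq_zero.mp h) hne1
  · rintro (h | h)
    · exact vtiling_exists m n k hk h
    · exact htiling_exists m n k hk h
end

section
/- Suppose k ≥ 2 and k < m < 2k, and n > k. In any fault-free tiling of an m×n rectangle by k×1 tiles, there exist k contiguous rows such that every tile meeting any of the remaining m−k rows is horizontal. -/
/-!
Since `m < 2k`, every vertical tile meets row `k - 1`, so a column holds at most one vertical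
tile. It suffices to show that all vertical tiles start in the same row `i₀`. If not, let `a`
be the leftmost column holding a vertical tile whose start differs from the start `i₀` of the
leftmost vertical tile. Left of `a`, whether `(r, c)` is covered by a vertical tile depends only
on `c` and on whether `r` lies in the window `[i₀, i₀ + k)`. Scanning a row from the left edge,
this pattern forces the tiles: a vertically covered cell is followed by a break, and an
uncovered cell at a break starts a horizontal tile. So rows with the same window membership
have the same breaks up to `a`. Each of the two classes contains a row covered at column `a` by
the new vertical tile, which therefore has a break at `a`; hence `x = a` is a fault.
-/

def vTile (k i j : ℕ) : Finset (ℕ × ℕ) := (Finset.range k).image fun s => (i + s, j)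

def hTile (k i j : ℕ) : Finset (ℕ × ℕ) := (Finset.range k).image fun s => (i, j + s)

theorem mem_vTile {k i j r c : ℕ} : (r, c) ∈ vTile k i j ↔ i ≤ r ∧ r < i + k ∧ c = j := by
  simp only [vTile, Finset.mem_image, Finset.mem_range, Prod.mk.injEq]
  constructor
  · rintro ⟨s, hs, rfl, rfl⟩
    omega
  · rintro ⟨h₁, h₂, rfl⟩
    exact ⟨r - i, by omega, by omega, rfl⟩

theorem mem_hTile {k i j r c : ℕ} : (r, c) ∈ hTile k i j ↔ r = i ∧ j ≤ c ∧ c < j + k := by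
  simp only [hTile, Finset.mem_image, Finset.mem_range, Prod.mk.injEq]
  constructor
  · rintro ⟨s, hs, rfl, rfl⟩
    omega
  · rintro ⟨rfl, h₁, h₂⟩
    exact ⟨c - j, by omega, rfl, by omega⟩

theorem vTile_ne_hTile {k : ℕ} (hk : 2 ≤ k) (i j i' j' : ℕ) : vTile k i j ≠ hTile k i' j' := by
  intro h
  have h₀ : (i, j) ∈ hTile k i' j' := h ▸ mem_vTile.mpr ⟨le_rfl, by omega, rfl⟩
  have h₁ : (i + 1, j) ∈ hTile k i' j' := h ▸ mem_vTile.mpr ⟨by omega, by omega, rfl⟩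
  have := (mem_hTile.mp h₀).1
  have := (mem_hTile.mp h₁).1
  omega

def VCovered (k : ℕ) (T : Finset (Finset (ℕ × ℕ))) (r c : ℕ) : Prop :=
  ∃ i, vTile k i c ∈ T ∧ i ≤ r ∧ r < i + k

/-- Row `r` is cut by the line `x = a`: one tile contains the cells of columns `a - 1` and `a`. -/
def Crosses (T : Finset (Finset (ℕ × ℕ))) (r a : ℕ) : Prop :=
  0 < a ∧ ∃ t ∈ T, (r, a - 1) ∈ t ∧ (r, a) ∈ t

section Tiling

variable {m n k : ℕ} {T : Finset (Finset (ℕ × ℕ))}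

theorem IsTiling.eq_of_mem_of_mem (hT : IsTiling m n k T) {t t' : Finset (ℕ × ℕ)}
    (ht : t ∈ T) (ht' : t' ∈ T) {p : ℕ × ℕ} (hp : p ∈ t) (hp' : p ∈ t') : t = t' := by
  by_contra hne
  exact Finset.disjoint_left.mp (hT.2.1 ht ht' hne) hp hp'

theorem IsTiling.exists_mem (hT : IsTiling m n k T) {r c : ℕ} (hr : r < m) (hc : c < n) :
    ∃ t ∈ T, (r, c) ∈ t := by
  have h : (r, c) ∈ grid m n := by simp [grid, hr, hc]
  rw [← hT.2.2] at h
  simpa using Finset.mem_biUnion.mp h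

theorem IsTiling.lt_of_mem (hT : IsTiling m n k T) {t : Finset (ℕ × ℕ)} (ht : t ∈ T)
    {p : ℕ × ℕ} (hp : p ∈ t) : p.1 < m ∧ p.2 < n := by
  have h : p ∈ T.biUnion id := Finset.mem_biUnion.mpr ⟨t, ht, hp⟩
  rw [hT.2.2] at h
  simpa [grid] using h

theorem IsTiling.vTile_bounds (hT : IsTiling m n k T) (hk : 0 < k) {i j : ℕ}
    (h : vTile k i j ∈ T) : i + k ≤ m ∧ j < n := by
  have := hT.lt_of_mem h (mem_vTile.mpr ⟨by omega, by omega, rfl⟩ : (i + (k - 1), j) ∈ _)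
  omega

theorem IsTiling.not_crosses_succ_of_vCovered (hT : IsTiling m n k T) {r a : ℕ}
    (h : VCovered k T r a) : ¬ Crosses T r (a + 1) := by
  rintro ⟨-, t, ht, hl, hr⟩
  obtain ⟨i, hi, hir, hri⟩ := h
  have hl : (r, a) ∈ t := by simpa using hl
  obtain rfl := hT.eq_of_mem_of_mem ht hi hl (mem_vTile.mpr ⟨hir, hri, rfl⟩)
  have := (mem_vTile.mp hr).2.2
  omega

theorem IsTiling.hTile_mem_of_not_crosses (hT : IsTiling m n k T) {r a : ℕ} (hr : r < m)
    (ha : a < n) (hnc : ¬ Crosses T r a) (hnv : ¬ VCovered k T r a) : hTile k r a ∈ T := by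
  obtain ⟨t, ht, hmem⟩ := hT.exists_mem hr ha
  rcases hT.1 t ht with ⟨i, j, rfl⟩ | ⟨i, j, rfl⟩
  · obtain ⟨rfl, hj, hjk⟩ := mem_hTile.mp (show (r, a) ∈ hTile k i j from hmem)
    obtain rfl : j = a := by
      by_contra hne
      exact hnc ⟨by omega, hTile k r j, ht, mem_hTile.mpr ⟨rfl, by omega, by omega⟩, hmem⟩
    exact ht
  · obtain ⟨hir, hri, rfl⟩ := mem_vTile.mp (show (r, a) ∈ vTile k i j from hmem)
    exact absurd ⟨i, ht, hir, hri⟩ hnv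

theorem IsTiling.not_vCovered_of_hTile_mem (hT : IsTiling m n k T) (hk : 2 ≤ k) {r a c : ℕ}
    (h : hTile k r a ∈ T) (hac : a ≤ c) (hca : c < a + k) : ¬ VCovered k T r c := by
  rintro ⟨i, hi, hir, hri⟩
  exact vTile_ne_hTile hk i c r a <| hT.eq_of_mem_of_mem hi h (mem_vTile.mpr ⟨hir, hri, rfl⟩)
    (mem_hTile.mpr ⟨rfl, hac, hca⟩)

theorem IsTiling.not_crosses_of_hTile_mem (hT : IsTiling m n k T) (hk : 2 ≤ k) {r a : ℕ}
    (h : hTile k r a ∈ T) : ¬ Crosses T r (a + k) := by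
  rintro ⟨-, t, ht, hl, hr⟩
  obtain rfl := hT.eq_of_mem_of_mem ht h hl (mem_hTile.mpr ⟨rfl, by omega, by omega⟩)
  have := (mem_hTile.mp hr).2.2
  omega

theorem IsTiling.not_crosses_of_vCovered_agree (hT : IsTiling m n k T) (hk : 2 ≤ k)
    {r₁ r₂ : ℕ} (hr₁ : r₁ < m) (hr₂ : r₂ < m) (d : ℕ) :
    ∀ b, ¬ Crosses T r₁ b → ¬ Crosses T r₂ b →
      (∀ c, b ≤ c → c < b + d → (VCovered k T r₁ c ↔ VCovered k T r₂ c)) →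
      VCovered k T r₁ (b + d) → ¬ Crosses T r₂ (b + d) := by
  induction d using Nat.strong_induction_on with
  | _ d ih =>
    intro b hnc₁ hnc₂ hagree hend
    rcases Nat.eq_zero_or_pos d with rfl | hd
    · exact hnc₂
    by_cases hv : VCovered k T r₁ b
    · have hv₂ := (hagree b le_rfl (by omega)).mp hv
      have := ih (d - 1) (by omega) (b + 1) (hT.not_crosses_succ_of_vCovered hv)
        (hT.not_crosses_succ_of_vCovered hv₂) (fun c hc₁ hc₂ => hagree c (by omega) (by omega))
        (by rwa [show b + 1 + (d - 1) = b + d by omega])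
      rwa [show b + 1 + (d - 1) = b + d by omega] at this
    · have hv₂ : ¬ VCovered k T r₂ b := fun h => hv ((hagree b le_rfl (by omega)).mpr h)
      have hbn : b < n := by
        obtain ⟨i, hi, -⟩ := hend
        have := (hT.vTile_bounds (by omega) hi).2
        omega
      have h₁ := hT.hTile_mem_of_not_crosses hr₁ hbn hnc₁ hv
      have h₂ := hT.hTile_mem_of_not_crosses hr₂ hbn hnc₂ hv₂
      have hkd : k ≤ d := by
        by_contra hkd
        exact hT.not_vCovered_of_hTile_mem hk h₁ (by omega) (by omega) hend
      have := ih (d - k) (by omega) (b + k) (hT.not_crosses_of_hTile_mem hk h₁)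
        (hT.not_crosses_of_hTile_mem hk h₂) (fun c hc₁ hc₂ => hagree c (by omega) (by omega))
        (by rwa [show b + k + (d - k) = b + d by omega])
      rwa [show b + k + (d - k) = b + d by omega] at this

theorem IsTiling.hasFaultAt_of_forall_not_crosses (hT : IsTiling m n k T) {a : ℕ} (ha : 0 < a)
    (h : ∀ r < m, ¬ Crosses T r a) : HasFaultAt T a := by
  intro t ht
  rcases hT.1 t ht with ⟨r, j, rfl⟩ | ⟨i, j, rfl⟩
  · by_cases hleft : j + k ≤ a
    · exact .inl fun ⟨r', c⟩ hc => by have := (mem_hTile.mp hc).2.2; omega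
    by_cases hright : a ≤ j
    · exact .inr fun ⟨r', c⟩ hc => by have := (mem_hTile.mp hc).2.1; exact this.trans' hright
    have hr := (hT.lt_of_mem ht (mem_hTile.mpr ⟨rfl, le_rfl, by omega⟩ : (r, j) ∈ _)).1
    exact absurd ⟨ha, hTile k r j, ht, mem_hTile.mpr ⟨rfl, by omega, by omega⟩,
      mem_hTile.mpr ⟨rfl, by omega, by omega⟩⟩ (h r hr)
  · rcases Nat.lt_or_ge j a with hja | hja
    · exact .inl fun ⟨r', c⟩ hc => by rw [(mem_vTile.mp hc).2.2]; exact hja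
    · exact .inr fun ⟨r', c⟩ hc => by rw [(mem_vTile.mp hc).2.2]; exact hja

theorem IsTiling.vTile_start_eq_of_column (hT : IsTiling m n k T) (hm : m < 2 * k)
    {i i' j : ℕ} (h : vTile k i j ∈ T) (h' : vTile k i' j ∈ T) : i = i' := by
  have hb := (hT.vTile_bounds (by omega) h).1
  have hb' := (hT.vTile_bounds (by omega) h').1
  have heq := hT.eq_of_mem_of_mem h h' (mem_vTile.mpr ⟨by omega, by omega, rfl⟩ : (k - 1, j) ∈ _)
    (mem_vTile.mpr ⟨by omega, by omega, rfl⟩)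
  have := (mem_vTile.mp (heq ▸ mem_vTile.mpr ⟨le_rfl, by omega, rfl⟩ : (i, j) ∈ vTile k i' j)).1
  have := (mem_vTile.mp (heq ▸ mem_vTile.mpr ⟨le_rfl, by omega, rfl⟩ : (i', j) ∈ vTile k i j)).1
  omega

theorem IsTiling.not_crosses_of_vTile_start_ne (hT : IsTiling m n k T) (hk : 2 ≤ k)
    (hm : m < 2 * k) {i i₀ a : ℕ} (hi₀ : i₀ + k ≤ m) (hi : vTile k i a ∈ T) (hne : i ≠ i₀)
    (hleft : ∀ c < a, ∀ i', vTile k i' c ∈ T → i' = i₀) {r : ℕ} (hr : r < m) :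
    ¬ Crosses T r a := by
  have hia := (hT.vTile_bounds (by omega) hi).1
  have hagree : ∀ r₁, (i₀ ≤ r₁ ∧ r₁ < i₀ + k ↔ i₀ ≤ r ∧ r < i₀ + k) →
      ∀ c < a, (VCovered k T r₁ c ↔ VCovered k T r c) := by
    intro r₁ hw c hc
    constructor <;> rintro ⟨i', hi', hw'⟩ <;> obtain rfl := hleft c hc i' hi' <;>
      exact ⟨_, hi', by tauto⟩
  obtain ⟨r₁, hr₁, hw, hr₁i⟩ : ∃ r₁ < m, (i₀ ≤ r₁ ∧ r₁ < i₀ + k ↔ i₀ ≤ r ∧ r < i₀ + k) ∧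
      i ≤ r₁ ∧ r₁ < i + k := by
    by_cases hrw : i₀ ≤ r ∧ r < i₀ + k
    · exact ⟨k - 1, by omega, iff_of_true (by omega) hrw, by omega, by omega⟩
    · rcases Nat.lt_or_gt_of_ne hne with hlt | hgt
      · exact ⟨i, by omega, iff_of_false (by omega) hrw, le_rfl, by omega⟩
      · exact ⟨i + k - 1, by omega, iff_of_false (by omega) hrw, by omega, by omega⟩
  simpa using hT.not_crosses_of_vCovered_agree hk hr₁ hr a 0 (by simp [Crosses])
    (by simp [Crosses]) (fun c _ hc => hagree r₁ hw c (by omega)) (by simpa using ⟨i, hi, hr₁i⟩)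

theorem IsTiling.exists_vTile_start (hT : IsTiling m n k T) (hk : 2 ≤ k) (hkm : k < m)
    (hm : m < 2 * k) (hff : FaultFree n T) :
    ∃ i₀, i₀ + k ≤ m ∧ ∀ i j, vTile k i j ∈ T → i = i₀ := by
  classical
  by_cases hV : ∃ j i, vTile k i j ∈ T
  · obtain ⟨i₀, hi₀⟩ := Nat.find_spec hV
    have hi₀m := (hT.vTile_bounds (by omega) hi₀).1
    refine ⟨i₀, hi₀m, fun i a => ?_⟩
    induction a using Nat.strong_induction_on generalizing i with
    | _ a ih =>
      intro hi
      by_contra hne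
      rcases (Nat.find_min' hV ⟨i, hi⟩).lt_or_eq with hlt | heq
      · exact hff a (by omega) (hT.vTile_bounds (by omega) hi).2 <|
          hT.hasFaultAt_of_forall_not_crosses (by omega) fun r hr =>
            hT.not_crosses_of_vTile_start_ne hk hm hi₀m hi hne (fun c hc i' => ih c hc i') hr
      · exact hne (hT.vTile_start_eq_of_column hm hi (heq ▸ hi₀))
  · push Not at hV
    exact ⟨0, by omega, fun i j h => (hV j i h).elim⟩

end Tiling

theorem stmt_5_general (k m n : ℕ) (hk : 2 ≤ k) (h1 : k < m) (h2 : m < 2 * k)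
    (T : Finset (Finset (ℕ × ℕ))) (hT : IsTiling m n k T) (hff : FaultFree n T) :
    ∃ i0 : ℕ, i0 + k ≤ m ∧
      ∀ t ∈ T, (∃ c ∈ t, c.1 < i0 ∨ i0 + k ≤ c.1) → IsHTile k t := by
  obtain ⟨i₀, hi₀, hstart⟩ := hT.exists_vTile_start hk h1 h2 hff
  refine ⟨i₀, hi₀, fun t ht ⟨⟨r, c⟩, hc, hout⟩ => (hT.1 t ht).resolve_right ?_⟩
  rintro ⟨i, j, rfl⟩
  obtain rfl := hstart i j ht
  have := mem_vTile.mp hc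
  omega

theorem stmt_5 (k m n : ℕ) (hk : 2 ≤ k) (h1 : k < m) (h2 : m < 2 * k) (hn : k < n)
    (T : Finset (Finset (ℕ × ℕ))) (hT : IsTiling m n k T) (hff : FaultFree n T) :
    ∃ i0 : ℕ, i0 + k ≤ m ∧
      ∀ t ∈ T, (∃ c ∈ t, c.1 < i0 ∨ i0 + k ≤ c.1) → IsHTile k t :=
  stmt_5_general k m n hk h1 h2 T hT hff
end

section
/- Suppose k ≥ 2 and k < m < 2k. The number of fault-free tilings of an m×k rectangle by k×1 tiles equals m − k + 2. -/
/-! With only `k` columns, a horizontal tile fills a whole row, and since `m < 2 * k` any two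
vertical tiles in one column overlap, so a column holds at most one of them. Hence a vertical tile
starting in row `s` forces rows `s, …, s + k - 1` to be covered by `k` vertical tiles all starting
in row `s`, and every other row by a horizontal tile. The tilings are therefore the all-horizontal
one and the `m - k + 1` block tilings; as `k < m`, each contains a horizontal tile, which crosses
every vertical line. -/

namespace Tiling

def rowTile (k i : ℕ) : Finset (ℕ × ℕ) := {i} ×ˢ Finset.range k

def colTile (k a j : ℕ) : Finset (ℕ × ℕ) := Finset.Ico a (a + k) ×ˢ {j}

@[simp]
lemma mem_grid {m n : ℕ} {c : ℕ × ℕ} : c ∈ grid m n ↔ c.1 < m ∧ c.2 < n := by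
  simp [grid]

@[simp]
lemma mem_rowTile {k i : ℕ} {c : ℕ × ℕ} : c ∈ rowTile k i ↔ c.1 = i ∧ c.2 < k := by
  simp only [rowTile, Finset.mem_product, Finset.mem_singleton, Finset.mem_range]

@[simp]
lemma mem_colTile {k a j : ℕ} {c : ℕ × ℕ} :
    c ∈ colTile k a j ↔ (a ≤ c.1 ∧ c.1 < a + k) ∧ c.2 = j := by
  simp only [colTile, Finset.mem_product, Finset.mem_singleton, Finset.mem_Ico]

lemma rowTile_eq_image (k i : ℕ) : rowTile k i = (Finset.range k).image fun s => (i, 0 + s) := by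
  ext ⟨x, y⟩
  simp [eq_comm, and_comm]

lemma colTile_eq_image (k a j : ℕ) :
    colTile k a j = (Finset.range k).image fun s => (a + s, j) := by
  ext ⟨x, y⟩
  simp only [mem_colTile, Finset.mem_image, Finset.mem_range, Prod.mk.injEq]
  constructor
  · rintro ⟨⟨hax, hxa⟩, rfl⟩
    exact ⟨x - a, by omega, by omega, rfl⟩
  · rintro ⟨s, hs, rfl, rfl⟩
    omega

lemma isHTile_rowTile (k i : ℕ) : IsHTile k (rowTile k i) := ⟨i, 0, rowTile_eq_image k i⟩

lemma isVTile_colTile (k a j : ℕ) : IsVTile k (colTile k a j) := ⟨a, j, colTile_eq_image k a j⟩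

lemma rowTile_ne_colTile {k : ℕ} (hk : 2 ≤ k) (i a j : ℕ) : rowTile k i ≠ colTile k a j := by
  intro h
  have h0 : ((i, 0) : ℕ × ℕ) ∈ rowTile k i := by simp; omega
  have h1 : ((i, 1) : ℕ × ℕ) ∈ rowTile k i := by simp; omega
  rw [h, mem_colTile] at h0 h1
  omega

lemma colTile_inj {k : ℕ} (hk : 0 < k) {a j a' j' : ℕ} :
    colTile k a j = colTile k a' j' ↔ a = a' ∧ j = j' := by
  refine ⟨fun h => ?_, by rintro ⟨rfl, rfl⟩; rfl⟩
  have h₁ : ((a, j) : ℕ × ℕ) ∈ colTile k a' j' := by rw [← h]; simp; omega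
  have h₂ : ((a', j') : ℕ × ℕ) ∈ colTile k a j := by rw [h]; simp; omega
  simp only [mem_colTile] at h₁ h₂
  omega

def horizontalTiling (m k : ℕ) : Finset (Finset (ℕ × ℕ)) :=
  (Finset.range m).image (rowTile k)

def blockTiling (m k s : ℕ) : Finset (Finset (ℕ × ℕ)) :=
  (Finset.range m \ Finset.Ico s (s + k)).image (rowTile k) ∪
    (Finset.range k).image (colTile k s)

lemma isTiling_horizontalTiling (m k : ℕ) : IsTiling m k k (horizontalTiling m k) := by
  simp only [horizontalTiling]
  refine ⟨?_, ?_, ?_⟩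
  · simp only [Finset.mem_image]
    rintro _ ⟨i, -, rfl⟩
    exact Or.inl (isHTile_rowTile k i)
  · simp only [Finset.coe_image]
    rintro _ ⟨i, -, rfl⟩ _ ⟨i', -, rfl⟩ hne
    refine Finset.disjoint_left.2 fun c hc hc' => hne ?_
    rw [id, mem_rowTile] at hc hc'
    rw [← hc.1, ← hc'.1]
  · ext c
    simp only [Finset.mem_biUnion, Finset.mem_image, Finset.mem_range, id, mem_grid]
    constructor
    · rintro ⟨_, ⟨i, hi, rfl⟩, hc⟩
      rw [mem_rowTile] at hc
      omega
    · rintro ⟨h₁, h₂⟩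
      exact ⟨_, ⟨c.1, h₁, rfl⟩, by simpa⟩

lemma isTiling_blockTiling {m k s : ℕ} (hs : s + k ≤ m) : IsTiling m k k (blockTiling m k s) := by
  simp only [blockTiling]
  refine ⟨?_, ?_, ?_⟩
  · simp only [Finset.mem_union, Finset.mem_image]
    rintro _ (⟨i, -, rfl⟩ | ⟨j, -, rfl⟩)
    · exact Or.inl (isHTile_rowTile k i)
    · exact Or.inr (isVTile_colTile k s j)
  · simp only [Finset.coe_union, Finset.coe_image, Finset.coe_sdiff, Finset.coe_range,
      Finset.coe_Ico]
    rintro _ (⟨i, hi, rfl⟩ | ⟨j, -, rfl⟩) _ (⟨i', hi', rfl⟩ | ⟨j', -, rfl⟩) hne <;>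
      refine Finset.disjoint_left.2 fun c hc hc' => ?_ <;>
      simp only [id, mem_rowTile, mem_colTile] at hc hc'
    · exact hne (by rw [← hc.1, ← hc'.1])
    · exact hi.2 ⟨by omega, by omega⟩
    · exact hi'.2 ⟨by omega, by omega⟩
    · exact hne (by rw [← hc.2, ← hc'.2])
  · ext c
    simp only [Finset.mem_biUnion, Finset.mem_union, Finset.mem_image, Finset.mem_sdiff,
      Finset.mem_range, Finset.mem_Ico, id, mem_grid]
    constructor
    · rintro ⟨_, ⟨i, hi, rfl⟩ | ⟨j, hj, rfl⟩, hc⟩ <;> simp only [mem_rowTile, mem_colTile] at hc <;>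
        omega
    · rintro ⟨h₁, h₂⟩
      by_cases hc : s ≤ c.1 ∧ c.1 < s + k
      · exact ⟨_, Or.inr ⟨c.2, h₂, rfl⟩, by simpa using hc⟩
      · exact ⟨_, Or.inl ⟨c.1, ⟨h₁, hc⟩, rfl⟩, by simpa⟩

lemma blockTiling_injective {m k : ℕ} (hk : 2 ≤ k) : Function.Injective (blockTiling m k) := by
  intro s s' h
  have hmem : colTile k s 0 ∈ blockTiling m k s' := by
    rw [← h]; exact Finset.mem_union_right _ (Finset.mem_image_of_mem _ (by simp; omega))
  simp only [blockTiling, Finset.mem_union, Finset.mem_image] at hmem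
  rcases hmem with ⟨i, -, hi⟩ | ⟨j, -, hj⟩
  · exact absurd hi (rowTile_ne_colTile hk _ _ _)
  · exact ((colTile_inj (by omega)).1 hj).1.symm

lemma horizontalTiling_ne_blockTiling {m k : ℕ} (hk : 2 ≤ k) (s : ℕ) :
    horizontalTiling m k ≠ blockTiling m k s := by
  intro h
  have hmem : colTile k s 0 ∈ horizontalTiling m k := by
    rw [h]; exact Finset.mem_union_right _ (Finset.mem_image_of_mem _ (by simp; omega))
  obtain ⟨i, -, hi⟩ := Finset.mem_image.1 hmem
  exact rowTile_ne_colTile hk _ _ _ hi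

lemma faultFree_of_rowTile_mem {n i : ℕ} {T : Finset (Finset (ℕ × ℕ))} (h : rowTile n i ∈ T) :
    FaultFree n T := by
  intro a ha han hfault
  rcases hfault _ h with hleft | hright
  · have := hleft (i, n - 1) (by simp; omega)
    omega
  · have := hright (i, 0) (by simp; omega)
    omega

end Tiling

namespace IsTiling

open Tiling

variable {m n k : ℕ} {T T' : Finset (Finset (ℕ × ℕ))} {t t' : Finset (ℕ × ℕ)}

lemma subset_grid (hT : IsTiling m n k T) (ht : t ∈ T) : t ⊆ grid m n :=
  hT.2.2 ▸ Finset.subset_biUnion_of_mem id ht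

lemma exists_mem_s7 (hT : IsTiling m n k T) {c : ℕ × ℕ} (hc : c ∈ grid m n) : ∃ t ∈ T, c ∈ t := by
  rw [← hT.2.2] at hc
  simpa using hc

lemma eq_of_mem_of_mem_s7 (hT : IsTiling m n k T) (ht : t ∈ T) (ht' : t' ∈ T) {c : ℕ × ℕ}
    (hc : c ∈ t) (hc' : c ∈ t') : t = t' :=
  by_contra fun hne => Finset.disjoint_left.1 (hT.2.1 ht ht' hne) hc hc'

lemma nonempty (hT : IsTiling m n k T) (hk : 0 < k) (ht : t ∈ T) : t.Nonempty := by
  rcases hT.1 t ht with ⟨i, j, rfl⟩ | ⟨i, j, rfl⟩ <;> simpa using Nat.pos_iff_ne_zero.1 hk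

lemma eq_of_subset (hT : IsTiling m n k T) (hT' : IsTiling m n k T') (hk : 0 < k) (h : T ⊆ T') :
    T = T' := by
  refine h.antisymm fun t' ht' => ?_
  obtain ⟨c, hc⟩ := hT'.nonempty hk ht'
  obtain ⟨t, ht, hct⟩ := hT.exists_mem_s7 (hT'.subset_grid ht' hc)
  rwa [hT'.eq_of_mem_of_mem_s7 ht' (h ht) hc hct]

lemma eq_rowTile_or_eq_colTile (hT : IsTiling m k k T) (hk : 0 < k) (ht : t ∈ T) :
    (∃ i, t = rowTile k i) ∨ ∃ a j, t = colTile k a j := by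
  rcases hT.1 t ht with ⟨i, j, rfl⟩ | hv
  · have hlast := hT.subset_grid ht (Finset.mem_image_of_mem _ (Finset.mem_range.2
      (Nat.sub_lt hk one_pos)))
    obtain rfl : j = 0 := by simp only [mem_grid] at hlast; omega
    exact Or.inl ⟨i, (rowTile_eq_image k i).symm⟩
  · obtain ⟨a, j, rfl⟩ := hv
    exact Or.inr ⟨a, j, (colTile_eq_image k a j).symm⟩

lemma add_le_of_colTile_mem (hT : IsTiling m n k T) (hk : 0 < k) {a j : ℕ}
    (h : colTile k a j ∈ T) : a + k ≤ m := by
  have := hT.subset_grid h (show (a + k - 1, j) ∈ colTile k a j by simp; omega)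
  simp only [mem_grid] at this
  omega

lemma rowTile_mem_or_colTile_mem (hT : IsTiling m k k T) (hk : 0 < k) {i j : ℕ} (hi : i < m)
    (hj : j < k) : rowTile k i ∈ T ∨ ∃ a, (a ≤ i ∧ i < a + k) ∧ colTile k a j ∈ T := by
  obtain ⟨t, ht, hc⟩ := hT.exists_mem_s7 (show (i, j) ∈ grid m k by simp [hi, hj])
  rcases hT.eq_rowTile_or_eq_colTile hk ht with ⟨i', rfl⟩ | ⟨a, j', rfl⟩
  · obtain ⟨rfl, -⟩ := mem_rowTile.1 hc
    exact Or.inl ht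
  · obtain ⟨ha, rfl⟩ := mem_colTile.1 hc
    exact Or.inr ⟨a, ha, ht⟩

lemma start_eq_of_colTile_mem (hT : IsTiling m n k T) (hk : 0 < k) (hm : m < 2 * k) {a a' j : ℕ}
    (h : colTile k a j ∈ T) (h' : colTile k a' j ∈ T) : a = a' := by
  have ha := hT.add_le_of_colTile_mem hk h
  have ha' := hT.add_le_of_colTile_mem hk h'
  have hcell : (max a a', j) ∈ colTile k a j ∧ (max a a', j) ∈ colTile k a' j := by
    simp only [mem_colTile, le_max_left, le_max_right, max_lt_iff, true_and, and_true]
    omega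
  exact ((colTile_inj hk).1 (hT.eq_of_mem_of_mem_s7 h h' hcell.1 hcell.2)).1

lemma rowTile_notMem_of_colTile_mem (hT : IsTiling m k k T) (hk : 2 ≤ k) {s i j : ℕ}
    (h : colTile k s j ∈ T) (hsi : s ≤ i) (his : i < s + k) : rowTile k i ∉ T := by
  intro hrow
  have hcell : (i, j) ∈ colTile k s j := by simp [hsi, his]
  have hj : j < k := (mem_grid.1 (hT.subset_grid h hcell)).2
  exact rowTile_ne_colTile hk i s j (hT.eq_of_mem_of_mem_s7 hrow h (by simp [hj]) hcell)

lemma colTile_mem_of_colTile_mem (hT : IsTiling m k k T) (hk : 2 ≤ k) (hm : m < 2 * k)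
    {s j₀ j : ℕ} (h : colTile k s j₀ ∈ T) (hj : j < k) : colTile k s j ∈ T := by
  have hs := hT.add_le_of_colTile_mem (by omega) h
  have hcover : ∀ i, s ≤ i → i < s + k → ∃ a, (a ≤ i ∧ i < a + k) ∧ colTile k a j ∈ T := by
    intro i hsi his
    exact (hT.rowTile_mem_or_colTile_mem (by omega) (by omega) hj).resolve_left
      (hT.rowTile_notMem_of_colTile_mem hk h hsi his)
  obtain ⟨a, ha, hmem⟩ := hcover s le_rfl (by omega)
  obtain ⟨a', ha', hmem'⟩ := hcover (s + k - 1) (by omega) (by omega)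
  obtain rfl := hT.start_eq_of_colTile_mem (by omega) hm hmem hmem'
  obtain rfl : a = s := by omega
  exact hmem

lemma blockTiling_subset (hT : IsTiling m k k T) (hk : 2 ≤ k) (hm : m < 2 * k) {s j₀ : ℕ}
    (h : colTile k s j₀ ∈ T) : blockTiling m k s ⊆ T := by
  have hcol : ∀ j < k, colTile k s j ∈ T := fun j hj => hT.colTile_mem_of_colTile_mem hk hm h hj
  intro t ht
  simp only [blockTiling, Finset.mem_union, Finset.mem_image, Finset.mem_sdiff, Finset.mem_range,
    Finset.mem_Ico] at ht
  rcases ht with ⟨i, ⟨hi, hout⟩, rfl⟩ | ⟨j, hj, rfl⟩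
  · refine (hT.rowTile_mem_or_colTile_mem (by omega) hi (j := 0) (by omega)).resolve_right ?_
    rintro ⟨a, ha, hmem⟩
    obtain rfl := hT.start_eq_of_colTile_mem (by omega) hm hmem (hcol 0 (by omega))
    exact hout ha
  · exact hcol j hj

lemma horizontalTiling_subset (hT : IsTiling m k k T) (hk : 0 < k)
    (h : ∀ a j, colTile k a j ∉ T) : horizontalTiling m k ⊆ T := by
  intro t ht
  obtain ⟨i, hi, rfl⟩ := Finset.mem_image.1 ht
  obtain ⟨a, -, ha⟩ | h' := (hT.rowTile_mem_or_colTile_mem hk (Finset.mem_range.1 hi) hk).symm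
  · exact absurd ha (h a 0)
  · exact h'

lemma eq_horizontalTiling_or_eq_blockTiling (hT : IsTiling m k k T) (hk : 2 ≤ k)
    (hm : m < 2 * k) : T = horizontalTiling m k ∨ ∃ s, s + k ≤ m ∧ T = blockTiling m k s := by
  by_cases h : ∃ s j, colTile k s j ∈ T
  · obtain ⟨s, j, h⟩ := h
    have hs := hT.add_le_of_colTile_mem (by omega) h
    exact Or.inr ⟨s, hs,
      ((isTiling_blockTiling hs).eq_of_subset hT (by omega) (hT.blockTiling_subset hk hm h)).symm⟩
  · push Not at h
    exact Or.inl ((isTiling_horizontalTiling m k).eq_of_subset hT (by omega)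
      (hT.horizontalTiling_subset (by omega) h)).symm

lemma faultFree (hT : IsTiling m k k T) (hk : 2 ≤ k) (hkm : k < m) (hm : m < 2 * k) :
    FaultFree k T := by
  rcases hT.eq_horizontalTiling_or_eq_blockTiling hk hm with rfl | ⟨s, hs, rfl⟩
  · exact faultFree_of_rowTile_mem (i := 0) (Finset.mem_image_of_mem _ (by simp; omega))
  · obtain ⟨i, hi, hout⟩ : ∃ i, i < m ∧ (i < s ∨ s + k ≤ i) := by
      rcases Nat.eq_zero_or_pos s with rfl | hs0
      · exact ⟨m - 1, by omega, by omega⟩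
      · exact ⟨0, by omega, by omega⟩
    exact faultFree_of_rowTile_mem (i := i)
      (Finset.mem_union_left _ (Finset.mem_image_of_mem _ (by simp; omega)))

end IsTiling

namespace Tiling

lemma isTiling_iff {m k : ℕ} (hk : 2 ≤ k) (hkm : k ≤ m) (hm : m < 2 * k)
    {T : Finset (Finset (ℕ × ℕ))} :
    IsTiling m k k T ↔
      T ∈ insert (horizontalTiling m k) ((Finset.range (m - k + 1)).image (blockTiling m k)) := by
  simp only [Finset.mem_insert, Finset.mem_image, Finset.mem_range]
  constructor
  · intro hT
    rcases hT.eq_horizontalTiling_or_eq_blockTiling hk hm with rfl | ⟨s, hs, rfl⟩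
    · exact Or.inl rfl
    · exact Or.inr ⟨s, by omega, rfl⟩
  · rintro (rfl | ⟨s, hs, rfl⟩)
    · exact isTiling_horizontalTiling m k
    · exact isTiling_blockTiling (by omega)

lemma numTilings_eq {m k : ℕ} (hk : 2 ≤ k) (hkm : k ≤ m) (hm : m < 2 * k) :
    numTilings m k k = m - k + 2 := by
  classical
  have hnotMem : horizontalTiling m k ∉ (Finset.range (m - k + 1)).image (blockTiling m k) := by
    simp only [Finset.mem_image, not_exists, not_and]
    exact fun s _ h => horizontalTiling_ne_blockTiling hk s h.symm
  rw [numTilings, Nat.card_congr (Equiv.subtypeEquivRight fun T => isTiling_iff hk hkm hm),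
    Nat.card_eq_fintype_card, Fintype.card_coe, Finset.card_insert_of_notMem hnotMem,
    Finset.card_image_of_injective _ (blockTiling_injective hk), Finset.card_range]

end Tiling

theorem stmt_7 (k m : ℕ) (hk : 2 ≤ k) (h1 : k < m) (h2 : m < 2 * k) :
    numFFTilings m k k = m - k + 2 := by
  have hFF : numFFTilings m k k = numTilings m k k :=
    Nat.card_congr <| Equiv.subtypeEquivRight fun _ =>
      and_iff_left_of_imp fun hT => hT.faultFree hk h1 h2
  rw [hFF, Tiling.numTilings_eq hk h1.le h2]
end

section
/- The number of compositions (n_1,...,n_r) of kℓ with every part n_i ∈ {1, k}, such that k does not divide any proper partial sum n_1 + ... + n_s for s < r, equals C(k+ℓ−3, k−2), for integers k ≥ 2 and ℓ ≥ 2. Moreover every such composition has exactly k parts equal to 1 and length r = k + ℓ − 1. -/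
/-- For a list with entries in {1, k}, k ≠ 1, the sum is count₁ + k · countₖ. -/
lemma aux_sum_eq (k : ℕ) (hk : k ≠ 1) (c : List ℕ) (h : ∀ p ∈ c, p = 1 ∨ p = k) :
    c.sum = c.count 1 + k * c.count k := by
  induction c with
  | nil => simp
  | cons a t ih =>
    have ha := h a (by simp)
    have ht := ih (fun p hp => h p (by simp [hp]))
    rcases ha with rfl | rfl <;>
      simp [List.count_cons, ht, hk, Ne.symm hk] <;> ring

lemma aux_length_eq (k : ℕ) (hk : k ≠ 1) (c : List ℕ) (h : ∀ p ∈ c, p = 1 ∨ p = k) :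
    c.length = c.count 1 + c.count k := by
  induction c with
  | nil => simp
  | cons a t ih =>
    have ha := h a (by simp)
    have ht := ih (fun p hp => h p (by simp [hp]))
    rcases ha with rfl | rfl <;>
      simp [List.count_cons, ht, hk, Ne.symm hk] <;> omega

/-- monotonicity of count along prefixes -/
lemma aux_count_take_mono (c : List ℕ) (a : ℕ) {s t : ℕ} (hst : s ≤ t) :
    (c.take s).count a ≤ (c.take t).count a := by
  have : (c.take t).take s = c.take s := by
    rw [List.take_take, min_eq_left hst]
  rw [← this]
  exact ((c.take t).take_sublist s).count_le a

/-- intermediate value: any count value ≤ the total is achieved by some prefix -/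
lemma aux_exists_take_count (c : List ℕ) (a : ℕ) :
    ∀ j : ℕ, j ≤ c.count a → ∃ s ≤ c.length, (c.take s).count a = j := by
  induction c with
  | nil => intro j hj; simp_all
  | cons b t ih =>
    intro j hj
    rcases Nat.eq_zero_or_pos j with rfl | hjpos
    · exact ⟨0, by simp⟩
    by_cases hb : b = a
    · subst hb
      rw [List.count_cons_self] at hj
      obtain ⟨s, hs, hcount⟩ := ih (j - 1) (by omega)
      exact ⟨s + 1, by simpa using hs, by
        simp [List.take_succ_cons, List.count_cons_self, hcount]; omega⟩
    · rw [List.count_cons_of_ne hb] at hj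
      obtain ⟨s, hs, hcount⟩ := ih j hj
      exact ⟨s + 1, by simpa using hs, by
        simp [List.take_succ_cons, List.count_cons_of_ne hb, hcount]⟩

lemma aux_exists_take_count_lt (c : List ℕ) (a : ℕ) (j : ℕ) (hj : j < c.count a) :
    ∃ s < c.length, (c.take s).count a = j := by
  obtain ⟨s, hs, hcount⟩ := aux_exists_take_count c a j (le_of_lt hj)
  refine ⟨s, ?_, hcount⟩
  rcases lt_or_eq_of_le hs with h | rfl
  · exact h
  · rw [List.take_length] at hcount; omega

/-- the key structural characterization -/
lemma aux_char (k l : ℕ) (hk : 2 ≤ k) (hl : 2 ≤ l) (c : List ℕ) :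
    ((∀ p ∈ c, p = 1 ∨ p = k) ∧ c.sum = k * l ∧
        ∀ s : ℕ, 0 < s → s < c.length → ¬ k ∣ (c.take s).sum) ↔
      ∃ m : List ℕ, (∀ p ∈ m, p = 1 ∨ p = k) ∧ m.length = k + l - 3 ∧
        m.count 1 = k - 2 ∧ c = 1 :: (m ++ [1]) := by
  have hk1 : k ≠ 1 := by omega
  constructor
  · rintro ⟨hp, hsum, hdvd⟩
    have hse := aux_sum_eq k hk1 c hp
    have hle := aux_length_eq k hk1 c hp
    have hcne : c ≠ [] := by
      rintro rfl; simp at hsum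
      rcases hsum with h | h <;> omega
    have hlen2 : 2 ≤ c.length := by
      by_contra h
      push_neg at h
      interval_cases h' : c.length
      · exact hcne (List.length_eq_zero_iff.mp h')
      · obtain ⟨a, rfl⟩ := List.length_eq_one_iff.mp h'
        simp at hsum
        rcases hp a (by simp) with rfl | rfl <;> nlinarith
    have hdvd1 : k ∣ c.count 1 := by
      have h1 : k ∣ c.count 1 + k * c.count k := hse ▸ hsum ▸ ⟨l, rfl⟩
      exact (Nat.dvd_add_right (Dvd.intro _ rfl)).mp (by rwa [Nat.add_comm] at h1)
    obtain ⟨a, t, rfl⟩ : ∃ a t, c = a :: t := by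
      cases c with
      | nil => exact absurd rfl hcne
      | cons a t => exact ⟨a, t, rfl⟩
    have ha1 : a = 1 := by
      have h1 := hdvd 1 one_pos (by omega)
      simp at h1
      rcases hp a (by simp) with h | rfl
      · exact h
      · exact absurd ⟨1, by ring⟩ h1
    subst ha1
    have hc1pos : 1 ≤ ((1 : ℕ) :: t).count 1 := by simp [List.count_cons]
    set c := (1 : ℕ) :: t with hc
    have hc1le : c.count 1 ≤ k := by
      by_contra h
      push_neg at h
      obtain ⟨s, hs, hcount⟩ := aux_exists_take_count_lt c 1 k h
      have hspos : 0 < s := by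
        rcases Nat.eq_zero_or_pos s with rfl | h'
        · simp at hcount; omega
        · exact h'
      have hps : ∀ p ∈ c.take s, p = 1 ∨ p = k :=
        fun p hp' => hp p ((c.take_sublist s).mem hp')
      have := aux_sum_eq k hk1 (c.take s) hps
      exact hdvd s hspos hs (by
        rw [this, hcount]
        exact dvd_add dvd_rfl (dvd_mul_right _ _))
    have hc1 : c.count 1 = k := by
      rcases hdvd1 with ⟨m, hm⟩
      have h0 : m ≠ 0 := by rintro rfl; simp at hm; omega
      have h2 : m ≤ 1 := by
        by_contra h'
        push_neg at h'
        have : k * 2 ≤ k * m := Nat.mul_le_mul_left k h'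
        omega
      have h3 : m = 1 := by omega
      rw [h3, Nat.mul_one] at hm
      omega
    have hck : c.count k = l - 1 := by
      nlinarith [Nat.sub_add_cancel (show 1 ≤ l by omega)]
    have htne : t ≠ [] := by rintro rfl; simp [hc] at hlen2
    have hcne' : c ≠ [] := by simp [hc]
    have hlast : c.getLast hcne' = 1 := by
      rcases hp _ (c.getLast_mem hcne') with h | h
      · exact h
      · exfalso
        have hdecomp : c.dropLast ++ [c.getLast hcne'] = c :=
          List.dropLast_append_getLast _
        have hsum' : c.dropLast.sum + k = k * l := by
          rw [← hsum]
          conv_rhs => rw [← hdecomp]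
          simp [h]
        have hdl : c.dropLast = c.take (c.length - 1) := List.dropLast_eq_take
        refine hdvd (c.length - 1) (by omega) (by omega) ?_
        rw [← hdl]
        exact (Nat.dvd_add_right ⟨1, by ring⟩).mp
          (by rw [Nat.add_comm] at hsum'; exact hsum' ▸ ⟨l, rfl⟩)
    have htlast : t.getLast htne = 1 := by
      rw [← hlast]; exact (List.getLast_cons htne).symm
    have hdecomp : t.dropLast ++ [(1 : ℕ)] = t := by
      conv_rhs => rw [← List.dropLast_append_getLast htne]
      rw [htlast]
    refine ⟨t.dropLast, ?_, ?_, ?_, ?_⟩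
    · intro p hp'
      refine hp p ?_
      rw [hc]
      exact List.mem_cons_of_mem _ (t.dropLast_sublist.mem hp')
    · have h1 : c.length = k + l - 1 := by omega
      have h2 : t.length = k + l - 2 := by
        rw [hc] at h1; simp at h1; omega
      rw [List.length_dropLast, h2]; omega
    · have h1 : t.count 1 = t.dropLast.count 1 + 1 := by
        conv_lhs => rw [← hdecomp]
        simp
      have htc : t.count 1 = k - 1 := by
        rw [hc, List.count_cons_self] at hc1; omega
      omega
    · rw [hc, hdecomp]
  · rintro ⟨m, hm, hmlen, hmcnt, rfl⟩
    have hmk : m.count k = l - 1 := by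
      have := aux_length_eq k hk1 m hm
      omega
    have hck : ((1 : ℕ) :: (m ++ [1])).count k = l - 1 := by
      simp [List.count_cons, List.count_append, Ne.symm hk1, hmk]
    have hc1 : ((1 : ℕ) :: (m ++ [1])).count 1 = k := by
      simp [List.count_cons, List.count_append, hmcnt]; omega
    have hparts : ∀ p ∈ (1 : ℕ) :: (m ++ [1]), p = 1 ∨ p = k := by
      intro p hp
      simp at hp
      rcases hp with rfl | hp | rfl
      · exact Or.inl rfl
      · exact hm p hp
      · exact Or.inl rfl
    refine ⟨hparts, ?_, ?_⟩
    · rw [aux_sum_eq k hk1 _ hparts, hc1, hck]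
      have : l - 1 + 1 = l := by omega
      nlinarith
    · intro s hs hslen
      have hps : ∀ p ∈ ((1 : ℕ) :: (m ++ [1])).take s, p = 1 ∨ p = k :=
        fun p hp' => hparts p ((List.take_sublist _ _).mem hp')
      rw [aux_sum_eq k hk1 _ hps]
      have hlb : 1 ≤ (((1 : ℕ) :: (m ++ [1])).take s).count 1 := by
        obtain ⟨s', rfl⟩ : ∃ s', s = s' + 1 := ⟨s - 1, by omega⟩
        rw [List.take_succ_cons]
        simp [List.count_cons]
      have hub : (((1 : ℕ) :: (m ++ [1])).take s).count 1 ≤ k - 1 := by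
        have hclen : ((1 : ℕ) :: (m ++ [1])).length = m.length + 2 := by simp
        have h1 : (((1 : ℕ) :: (m ++ [1])).take s).count 1 ≤
            (((1 : ℕ) :: (m ++ [1])).take (m.length + 1)).count 1 :=
          aux_count_take_mono _ 1 (by omega)
        have h2 : ((1 : ℕ) :: (m ++ [1])).take (m.length + 1) = 1 :: m := by
          have h3 : m.length + 1 = ((1 : ℕ) :: m).length := by simp
          have h4 : (1 : ℕ) :: (m ++ [1]) = ((1 : ℕ) :: m) ++ [1] := by simp
          rw [h3, h4, List.take_left]
        rw [h2] at h1
        simp [List.count_cons, hmcnt] at h1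
        omega
      intro hdvd
      have hd1 : k ∣ (((1 : ℕ) :: (m ++ [1])).take s).count 1 :=
        (Nat.dvd_add_right (Dvd.intro _ rfl)).mp (by rwa [Nat.add_comm] at hdvd)
      have := Nat.le_of_dvd (by omega) hd1
      omega

lemma aux_count_ofFn (n : ℕ) (f : Fin n → ℕ) (a : ℕ) :
    (List.ofFn f).count a = ∑ i, if f i = a then 1 else 0 := by
  induction n with
  | zero => simp
  | succ n ih =>
    rw [List.ofFn_succ, Fin.sum_univ_succ, List.count_cons, ih]
    simp only [beq_iff_eq]
    exact Nat.add_comm _ _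

lemma aux_ofFn_getD (m : List ℕ) :
    List.ofFn (fun i : Fin m.length => m.getD i 0) = m := by
  apply List.ext_getElem
  · simp
  · intro i h1 h2
    simp only [List.getElem_ofFn]
    exact List.getD_eq_getElem m 0 h2

lemma aux_card_filter_count (m : List ℕ) :
    (Finset.univ.filter fun i : Fin m.length => m.getD i 0 = 1).card = m.count 1 := by
  conv_rhs => rw [← aux_ofFn_getD m]
  rw [aux_count_ofFn]
  simp

lemma aux_ofFn_eq (k : ℕ) (m : List ℕ) (hm : ∀ p ∈ m, p = 1 ∨ p = k) :
    List.ofFn (fun i : Fin m.length => if m.getD i 0 = 1 then 1 else k) = m := by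
  apply List.ext_getElem
  · simp
  · intro i h1 h2
    simp only [List.getElem_ofFn]
    rw [List.getD_eq_getElem m 0 (by simpa using h1)]
    rcases hm (m[i]'(by simpa using h1)) (List.getElem_mem _) with h | h
    · simp [h]
    · split
      · omega
      · omega

theorem stmt_11 (k l : ℕ) (hk : 2 ≤ k) (hl : 2 ≤ l) :
    Nat.card {c : List ℕ // (∀ p ∈ c, p = 1 ∨ p = k) ∧ c.sum = k * l ∧
        ∀ s : ℕ, 0 < s → s < c.length → ¬ k ∣ (c.take s).sum} =
      Nat.choose (k + l - 3) (k - 2) ∧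
    ∀ c : List ℕ, ((∀ p ∈ c, p = 1 ∨ p = k) ∧ c.sum = k * l ∧
        ∀ s : ℕ, 0 < s → s < c.length → ¬ k ∣ (c.take s).sum) →
      c.count 1 = k ∧ c.length = k + l - 1 := by
  have hk1 : k ≠ 1 := by omega
  constructor
  · -- cardinality
    obtain ⟨n, hn⟩ : ∃ n, k + l - 3 = n := ⟨_, rfl⟩
    obtain ⟨j, hj⟩ : ∃ j, k - 2 = j := ⟨_, rfl⟩
    rw [hn, hj]
    have step1 : Nat.card {s : Finset (Fin n) // s.card = j} =
        Nat.card {c : List ℕ // (∀ p ∈ c, p = 1 ∨ p = k) ∧ c.sum = k * l ∧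
          ∀ s : ℕ, 0 < s → s < c.length → ¬ k ∣ (c.take s).sum} := by
      apply Nat.card_eq_of_bijective
        (f := fun s => ⟨1 :: ((List.ofFn fun i => if i ∈ s.1 then 1 else k) ++ [1]), by
          rw [aux_char k l hk hl]
          refine ⟨List.ofFn fun i => if i ∈ s.1 then 1 else k, ?_, by simp [hn], ?_, rfl⟩
          · intro p hp
            simp [List.mem_ofFn] at hp
            obtain ⟨i, hi⟩ := hp
            split at hi <;> simp [← hi]
          · rw [aux_count_ofFn]
            have heq : ∀ i : Fin n, (if (if i ∈ s.1 then 1 else k) = 1 then 1 else 0) =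
                if i ∈ s.1 then 1 else 0 := by
              intro i; split <;> simp_all
            rw [Finset.sum_congr rfl (fun i _ => heq i), Finset.sum_boole]
            rw [hj]
            simpa using s.2⟩)
      constructor
      · intro s t hst
        simp only [Subtype.mk.injEq, List.cons.injEq, true_and] at hst
        have h1 : (List.ofFn fun i => if i ∈ s.1 then 1 else k) =
            (List.ofFn fun i => if i ∈ t.1 then 1 else k) :=
          List.append_cancel_right hst
        have h2 := List.ofFn_injective h1
        ext1
        ext i
        have hi := congrFun h2 i
        constructor <;> intro h <;> by_contra h' <;> simp [h, h'] at hi <;> omega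
      · rintro ⟨c, hc⟩
        rw [aux_char k l hk hl] at hc
        obtain ⟨m, hm, hmlen, hmcnt, rfl⟩ := hc
        rw [hn] at hmlen
        rw [hj] at hmcnt
        subst hmlen
        refine ⟨⟨Finset.univ.filter (fun i : Fin m.length => m.getD i 0 = 1), ?_⟩, ?_⟩
        · rw [aux_card_filter_count, hmcnt]
        · ext1
          simp only [List.cons.injEq, true_and]
          congr 1
          have : (fun i : Fin m.length =>
              if i ∈ Finset.univ.filter (fun i : Fin m.length => m.getD i 0 = 1)
              then 1 else k) =
              fun i : Fin m.length => if m.getD i 0 = 1 then 1 else k := by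
            funext i
            simp
          rw [this]
          exact aux_ofFn_eq k m hm
    rw [← step1, Nat.card_eq_fintype_card, Fintype.card_finset_len]
    simp
  · -- counts and length
    intro c hc
    rw [aux_char k l hk hl] at hc
    obtain ⟨m, hm, hmlen, hmcnt, rfl⟩ := hc
    constructor
    · simp [List.count_cons, List.count_append, hmcnt]; omega
    · simp [hmlen]; omega
end

section
/- Suppose k ≥ 2 and k < m < 2k, and let b(m,n,r) denote the number of tilings of an m×n rectangle by k×1 tiles containing exactly r vertical tiles. Then Σ_{n,r≥0} b(m,n,r) x^n y^r = (1−x^k)^{k−1} / ((1−x^k)^k − (m−k+1) x^k y^k) as formal power series in two variables. -/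
/-- The number of tilings of the `m × n` rectangle by `k × 1` tiles with exactly `r`
vertical tiles. -/
noncomputable def numTilingsVert (m n k r : ℕ) : ℕ :=
  Nat.card {T : Finset (Finset (ℕ × ℕ)) // IsTiling m n k T ∧
    {t : Finset (ℕ × ℕ) | t ∈ T ∧ IsVTile k t}.ncard = r}

/-- The generating function `Σ_{n,r} b(m,n,r) x^n y^r` as a multivariate power
series in two variables `x = X 0`, `y = X 1`. -/
noncomputable def tilingsVertGF (m k : ℕ) : MvPowerSeries (Fin 2) ℚ :=
  fun d => (numTilingsVert m (d 0) k (d 1) : ℚ)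


open Finset

namespace Stmt14

/-- concrete horizontal tile -/
def hT (k i j : ℕ) : Finset (ℕ × ℕ) := (Finset.range k).image fun s => (i, j + s)
/-- concrete vertical tile -/
def vT (k i j : ℕ) : Finset (ℕ × ℕ) := (Finset.range k).image fun s => (i + s, j)

variable {k : ℕ}

lemma mem_hT (hk : 0 < k) {i j : ℕ} {p : ℕ × ℕ} :
    p ∈ hT k i j ↔ p.1 = i ∧ j ≤ p.2 ∧ p.2 < j + k := by
  constructor
  · rintro hp
    simp only [hT, mem_image, mem_range] at hp
    obtain ⟨s, hs, rfl⟩ := hp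
    simp; omega
  · rintro ⟨h1, h2, h3⟩
    simp only [hT, mem_image, mem_range]
    exact ⟨p.2 - j, by omega, by rw [← h1]; ext <;> simp <;> omega⟩

lemma mem_vT (hk : 0 < k) {i j : ℕ} {p : ℕ × ℕ} :
    p ∈ vT k i j ↔ p.2 = j ∧ i ≤ p.1 ∧ p.1 < i + k := by
  constructor
  · rintro hp
    simp only [vT, mem_image, mem_range] at hp
    obtain ⟨s, hs, rfl⟩ := hp
    simp; omega
  · rintro ⟨h1, h2, h3⟩
    simp only [vT, mem_image, mem_range]
    exact ⟨p.1 - i, by omega, by rw [← h1]; ext <;> simp <;> omega⟩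

lemma isHTile_hT (i j : ℕ) : IsHTile k (hT k i j) := ⟨i, j, rfl⟩
lemma isVTile_vT (i j : ℕ) : IsVTile k (vT k i j) := ⟨i, j, rfl⟩

lemma isHTile_iff {t : Finset (ℕ × ℕ)} : IsHTile k t ↔ ∃ i j, t = hT k i j := Iff.rfl
lemma isVTile_iff {t : Finset (ℕ × ℕ)} : IsVTile k t ↔ ∃ i j, t = vT k i j := Iff.rfl

lemma hT_nonempty (hk : 0 < k) (i j : ℕ) : (hT k i j).Nonempty :=
  ⟨(i, j), (mem_hT hk).2 ⟨rfl, le_rfl, by omega⟩⟩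

lemma vT_nonempty (hk : 0 < k) (i j : ℕ) : (vT k i j).Nonempty :=
  ⟨(i, j), (mem_vT hk).2 ⟨rfl, le_rfl, by omega⟩⟩

lemma hT_ne_vT (hk : 2 ≤ k) (i j i' j' : ℕ) : hT k i j ≠ vT k i' j' := by
  intro h
  have h1 : ((i, j) : ℕ × ℕ) ∈ hT k i j := (mem_hT (by omega)).2 ⟨rfl, le_rfl, by omega⟩
  have h2 : ((i, j+1) : ℕ × ℕ) ∈ hT k i j := (mem_hT (by omega)).2 ⟨rfl, by omega, by omega⟩
  rw [h, mem_vT (by omega)] at h1 h2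
  simp at h1 h2; omega

lemma not_isVTile_hT (hk : 2 ≤ k) (i j : ℕ) : ¬ IsVTile k (hT k i j) := by
  rintro ⟨i', j', h⟩
  exact hT_ne_vT hk i j i' j' h

lemma not_isHTile_vT (hk : 2 ≤ k) (i j : ℕ) : ¬ IsHTile k (vT k i j) := by
  rintro ⟨i', j', h⟩
  exact hT_ne_vT hk i' j' i j h.symm

/-- tiling of a general region -/
def IsRT (k : ℕ) (R : Finset (ℕ × ℕ)) (T : Finset (Finset (ℕ × ℕ))) : Prop :=
  (∀ t ∈ T, IsHTile k t ∨ IsVTile k t) ∧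
  (T : Set (Finset (ℕ × ℕ))).PairwiseDisjoint id ∧
  T.biUnion id = R

lemma isTiling_iff {m n : ℕ} {T : Finset (Finset (ℕ × ℕ))} :
    IsTiling m n k T ↔ IsRT k (grid m n) T := Iff.rfl

/-- number of vertical tiles -/
noncomputable def vc (k : ℕ) (T : Finset (Finset (ℕ × ℕ))) : ℕ :=
  {t : Finset (ℕ × ℕ) | t ∈ T ∧ IsVTile k t}.ncard

open scoped Classical in
lemma vc_eq_card_filter (T : Finset (Finset (ℕ × ℕ))) :
    vc k T = (T.filter (fun t => IsVTile k t)).card := by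
  rw [vc, ← Set.ncard_coe_finset]
  congr 1
  ext t; simp

/-- number of tilings of region `R` with `r` vertical tiles -/
noncomputable def cnt (k : ℕ) (R : Finset (ℕ × ℕ)) (r : ℕ) : ℕ :=
  Nat.card {T : Finset (Finset (ℕ × ℕ)) // IsRT k R T ∧ vc k T = r}

lemma numTilingsVert_eq (m n r : ℕ) : numTilingsVert m n k r = cnt k (grid m n) r := rfl

lemma tile_subset {R : Finset (ℕ × ℕ)} {T} (hT : IsRT k R T) {t} (ht : t ∈ T) : t ⊆ R := by
  rw [← hT.2.2]
  exact subset_biUnion_of_mem id ht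

open scoped Classical in
/-- the finset of tilings of `R` with `r` vertical tiles -/
noncomputable def tilingsF (k : ℕ) (R : Finset (ℕ × ℕ)) (r : ℕ) : Finset (Finset (Finset (ℕ × ℕ))) :=
  R.powerset.powerset.filter (fun T => IsRT k R T ∧ vc k T = r)

lemma mem_tilingsF {R : Finset (ℕ × ℕ)} {r : ℕ} {T} :
    T ∈ tilingsF k R r ↔ IsRT k R T ∧ vc k T = r := by
  classical
  simp only [tilingsF, mem_filter, mem_powerset, and_iff_right_iff_imp]
  rintro ⟨h1, h2⟩
  intro t ht
  simp only [mem_powerset]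
  exact tile_subset h1 (by simpa using ht)

lemma cnt_eq_card (R : Finset (ℕ × ℕ)) (r : ℕ) : cnt k R r = (tilingsF k R r).card := by
  have h : {T : Finset (Finset (ℕ × ℕ)) | IsRT k R T ∧ vc k T = r} = ↑(tilingsF k R r) := by
    ext T; simp [mem_tilingsF]
  rw [cnt, ← Set.ncard_coe_finset, ← h, ← Nat.card_coe_set_eq]
  rfl


lemma tile_nonempty (hk : 0 < k) {t : Finset (ℕ × ℕ)} (h : IsHTile k t ∨ IsVTile k t) :
    t.Nonempty := by
  obtain (⟨i, j, rfl⟩ | ⟨i, j, rfl⟩) := h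
  exacts [hT_nonempty hk i j, vT_nonempty hk i j]

lemma erase_tiling {R : Finset (ℕ × ℕ)} {T : Finset (Finset (ℕ × ℕ))} {t : Finset (ℕ × ℕ)}
    (h : IsRT k R T) (ht : t ∈ T) : IsRT k (R \ t) (T.erase t) := by
  obtain ⟨h1, h2, h3⟩ := h
  refine ⟨fun u hu => h1 u (mem_of_mem_erase hu),
    h2.subset (by exact_mod_cast Finset.erase_subset t T), ?_⟩
  ext x
  simp only [mem_biUnion, id, mem_sdiff, mem_erase]
  constructor
  · rintro ⟨u, ⟨hne, hu⟩, hx⟩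
    refine ⟨by rw [← h3]; exact mem_biUnion.2 ⟨u, hu, hx⟩, fun hxt => ?_⟩
    have hdisj : Disjoint u t := h2 (by simpa using hu) (by simpa using ht) hne
    exact (Finset.disjoint_left.1 hdisj hx) hxt
  · rintro ⟨hxR, hxt⟩
    rw [← h3] at hxR
    obtain ⟨u, hu, hx⟩ := mem_biUnion.1 hxR
    exact ⟨u, ⟨fun he => hxt (he ▸ hx), hu⟩, hx⟩

lemma insert_tiling {R : Finset (ℕ × ℕ)} {T' : Finset (Finset (ℕ × ℕ))} {t : Finset (ℕ × ℕ)}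
    (h : IsRT k (R \ t) T') (h1 : IsHTile k t ∨ IsVTile k t) (h2 : t ⊆ R) :
    IsRT k R (insert t T') := by
  have hdis : ∀ u ∈ T', Disjoint u t := by
    intro u hu
    have hsub : u ⊆ R \ t := tile_subset h hu
    exact Finset.disjoint_left.2 fun x hx hxt => (Finset.mem_sdiff.1 (hsub hx)).2 hxt
  obtain ⟨g1, g2, g3⟩ := h
  refine ⟨?_, ?_, ?_⟩
  · intro u hu
    rcases Finset.mem_insert.1 hu with rfl | hu
    exacts [h1, g1 u hu]
  · rw [Finset.coe_insert]
    refine Set.PairwiseDisjoint.insert g2 fun u hu _ => ((hdis u (by simpa using hu)).symm : Disjoint (id t) (id u))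
  · rw [Finset.biUnion_insert, g3]
    have : (id t : Finset (ℕ × ℕ)) = t := rfl
    rw [this, Finset.union_sdiff_of_subset h2]

lemma not_mem_of_sdiff_tiling (hk : 0 < k) {R : Finset (ℕ × ℕ)} {T' : Finset (Finset (ℕ × ℕ))}
    {t : Finset (ℕ × ℕ)} (h : IsRT k (R \ t) T') (h1 : IsHTile k t ∨ IsVTile k t) : t ∉ T' := by
  intro ht
  obtain ⟨x, hx⟩ := tile_nonempty hk h1
  exact (Finset.mem_sdiff.1 (tile_subset h ht hx)).2 hx

open scoped Classical in
lemma vc_erase_v {T : Finset (Finset (ℕ × ℕ))} {t : Finset (ℕ × ℕ)} (ht : t ∈ T)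
    (hv : IsVTile k t) : vc k (T.erase t) = vc k T - 1 := by
  rw [vc_eq_card_filter, vc_eq_card_filter, Finset.filter_erase,
    Finset.card_erase_of_mem (Finset.mem_filter.2 ⟨ht, hv⟩)]

open scoped Classical in
lemma vc_erase_h {T : Finset (Finset (ℕ × ℕ))} {t : Finset (ℕ × ℕ)}
    (hv : ¬ IsVTile k t) : vc k (T.erase t) = vc k T := by
  rw [vc_eq_card_filter, vc_eq_card_filter, Finset.filter_erase,
    Finset.erase_eq_of_notMem (fun hm => hv (Finset.mem_filter.1 hm).2)]

open scoped Classical in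
lemma vc_insert_v {T' : Finset (Finset (ℕ × ℕ))} {t : Finset (ℕ × ℕ)} (ht : t ∉ T')
    (hv : IsVTile k t) : vc k (insert t T') = vc k T' + 1 := by
  rw [vc_eq_card_filter, vc_eq_card_filter, Finset.filter_insert, if_pos hv,
    Finset.card_insert_of_notMem (fun hm => ht (Finset.mem_filter.1 hm).1)]

open scoped Classical in
lemma vc_insert_h {T' : Finset (Finset (ℕ × ℕ))} {t : Finset (ℕ × ℕ)}
    (hv : ¬ IsVTile k t) : vc k (insert t T') = vc k T' := by
  rw [vc_eq_card_filter, vc_eq_card_filter, Finset.filter_insert, if_neg hv]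

open scoped Classical in
/-- Master peel lemma: pick a cell `c` of `R`; `C` is the (complete) set of potential
tiles covering `c` inside `R`. -/
lemma peel (hk : 2 ≤ k) {R : Finset (ℕ × ℕ)} {c : ℕ × ℕ} (hc : c ∈ R)
    (C : Finset (Finset (ℕ × ℕ)))
    (hC1 : ∀ t ∈ C, (IsHTile k t ∨ IsVTile k t) ∧ c ∈ t ∧ t ⊆ R)
    (hC2 : ∀ t, IsHTile k t ∨ IsVTile k t → c ∈ t → t ⊆ R → t ∈ C) (r : ℕ) :
    cnt k R r = ∑ t ∈ C, (if IsVTile k t then (if r = 0 then 0 else cnt k (R \ t) (r - 1))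
      else cnt k (R \ t) r) := by
  have hk0 : 0 < k := by omega
  rw [cnt_eq_card]
  have hsplit : tilingsF k R r = C.biUnion (fun t => (tilingsF k R r).filter (fun T => t ∈ T)) := by
    ext T
    simp only [mem_biUnion, mem_filter]
    constructor
    · intro hT
      obtain ⟨h1, h2⟩ := mem_tilingsF.1 hT
      have hcT : c ∈ T.biUnion id := by rw [h1.2.2]; exact hc
      obtain ⟨t, htT, hct⟩ := mem_biUnion.1 hcT
      exact ⟨t, hC2 t (h1.1 t htT) hct (tile_subset h1 htT), hT, htT⟩
    · rintro ⟨t, _, hT, _⟩; exact hT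
  rw [hsplit, Finset.card_biUnion]
  · apply Finset.sum_congr rfl
    intro t htC
    obtain ⟨hHV, hct, htR⟩ := hC1 t htC
    by_cases hv : IsVTile k t
    · rw [if_pos hv]
      rcases Nat.eq_zero_or_pos r with rfl | hr
      · rw [if_pos rfl, Finset.card_eq_zero, Finset.filter_eq_empty_iff]
        intro T hT htT
        obtain ⟨h1, h2⟩ := mem_tilingsF.1 hT
        have : 0 < vc k T := by
          rw [vc_eq_card_filter]
          exact Finset.card_pos.2 ⟨t, Finset.mem_filter.2 ⟨htT, hv⟩⟩
        omega
      · rw [if_neg (by omega), cnt_eq_card]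
        apply Finset.card_bij' (fun T _ => T.erase t) (fun T' _ => insert t T')
        · intro T hT
          exact Finset.insert_erase (Finset.mem_filter.1 hT).2
        · intro T' hT'
          obtain ⟨h1, _⟩ := mem_tilingsF.1 hT'
          exact Finset.erase_insert (not_mem_of_sdiff_tiling hk0 h1 hHV)
        · intro T hT
          obtain ⟨hmem, htT⟩ := Finset.mem_filter.1 hT
          obtain ⟨h1, h2⟩ := mem_tilingsF.1 hmem
          exact mem_tilingsF.2 ⟨erase_tiling h1 htT, by rw [vc_erase_v htT hv, h2]⟩
        · intro T' hT'
          obtain ⟨h1, h2⟩ := mem_tilingsF.1 hT'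
          have hnm := not_mem_of_sdiff_tiling hk0 h1 hHV
          refine Finset.mem_filter.2 ⟨mem_tilingsF.2 ⟨insert_tiling h1 hHV htR, ?_⟩,
            Finset.mem_insert_self _ _⟩
          rw [vc_insert_v hnm hv, h2]; omega
    · rw [if_neg hv, cnt_eq_card]
      apply Finset.card_bij' (fun T _ => T.erase t) (fun T' _ => insert t T')
      · intro T hT
        exact Finset.insert_erase (Finset.mem_filter.1 hT).2
      · intro T' hT'
        obtain ⟨h1, _⟩ := mem_tilingsF.1 hT'
        exact Finset.erase_insert (not_mem_of_sdiff_tiling hk0 h1 hHV)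
      · intro T hT
        obtain ⟨hmem, htT⟩ := Finset.mem_filter.1 hT
        obtain ⟨h1, h2⟩ := mem_tilingsF.1 hmem
        exact mem_tilingsF.2 ⟨erase_tiling h1 htT, by rw [vc_erase_h hv, h2]⟩
      · intro T' hT'
        obtain ⟨h1, h2⟩ := mem_tilingsF.1 hT'
        refine Finset.mem_filter.2 ⟨mem_tilingsF.2 ⟨insert_tiling h1 hHV htR, ?_⟩,
          Finset.mem_insert_self _ _⟩
        rw [vc_insert_h hv, h2]
  · intro t1 h1 t2 h2 hne
    rw [Function.onFun, Finset.disjoint_left]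
    intro T hT1 hT2
    obtain ⟨hm1, ht1⟩ := Finset.mem_filter.1 hT1
    obtain ⟨_, ht2⟩ := Finset.mem_filter.1 hT2
    obtain ⟨g1, _⟩ := mem_tilingsF.1 hm1
    have hdisj : Disjoint t1 t2 := g1.2.1 (by simpa using ht1) (by simpa using ht2) hne
    exact (Finset.disjoint_left.1 hdisj (hC1 t1 h1).2.1) ((hC1 t2 h2).2.1)


/-- shift of the plane by `v` columns -/
def sh (v : ℕ) (p : ℕ × ℕ) : ℕ × ℕ := (p.1, p.2 + v)

/-- unshift -/
def ush (v : ℕ) (p : ℕ × ℕ) : ℕ × ℕ := (p.1, p.2 - v)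

lemma sh_injective (v : ℕ) : Function.Injective (sh v) := by
  intro a b h
  simp only [sh, Prod.ext_iff] at h ⊢
  omega

lemma image_sh_hT (v i j : ℕ) : (hT k i j).image (sh v) = hT k i (j + v) := by
  unfold hT
  rw [Finset.image_image]
  apply Finset.image_congr
  intro s _
  simp [Function.comp, sh, Prod.ext_iff] <;> omega

lemma image_sh_vT (v i j : ℕ) : (vT k i j).image (sh v) = vT k i (j + v) := by
  unfold vT
  rw [Finset.image_image]
  apply Finset.image_congr
  intro s _
  simp [Function.comp, sh, Prod.ext_iff] <;> omega

lemma image_ush_hT (v i j : ℕ) (hv : v ≤ j) : (hT k i j).image (ush v) = hT k i (j - v) := by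
  unfold hT
  rw [Finset.image_image]
  apply Finset.image_congr
  intro s _
  simp [Function.comp, ush, Prod.ext_iff] <;> omega

lemma image_ush_vT (v i j : ℕ) (hv : v ≤ j) : (vT k i j).image (ush v) = vT k i (j - v) := by
  unfold vT
  rw [Finset.image_image]
  apply Finset.image_congr
  intro s _
  simp [Function.comp, ush, Prod.ext_iff] <;> omega

lemma isRT_image_sh (hk : 2 ≤ k) {R : Finset (ℕ × ℕ)} {T : Finset (Finset (ℕ × ℕ))} (v : ℕ)
    (h : IsRT k R T) :
    IsRT k (R.image (sh v)) (T.image (fun t => t.image (sh v))) := by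
  obtain ⟨h1, h2, h3⟩ := h
  refine ⟨?_, ?_, ?_⟩
  · intro u hu
    obtain ⟨t, ht, rfl⟩ := Finset.mem_image.1 hu
    rcases h1 t ht with ⟨i, j, rfl⟩ | ⟨i, j, rfl⟩
    · exact Or.inl ⟨i, j + v, image_sh_hT v i j⟩
    · exact Or.inr ⟨i, j + v, image_sh_vT v i j⟩
  · intro u1 hu1 u2 hu2 hne
    simp only [Finset.coe_image, Set.mem_image, Finset.mem_coe] at hu1 hu2
    obtain ⟨t1, ht1, rfl⟩ := hu1
    obtain ⟨t2, ht2, rfl⟩ := hu2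
    have htne : t1 ≠ t2 := fun he => hne (by rw [he])
    have : Disjoint t1 t2 := h2 (by simpa using ht1) (by simpa using ht2) htne
    exact (Finset.disjoint_image (sh_injective v)).2 this
  · ext x
    simp only [mem_biUnion, id, Finset.mem_image]
    constructor
    · rintro ⟨u, ⟨t, ht, rfl⟩, hx⟩
      obtain ⟨y, hy, rfl⟩ := Finset.mem_image.1 hx
      exact ⟨y, by rw [← h3]; exact mem_biUnion.2 ⟨t, ht, hy⟩, rfl⟩
    · rintro ⟨y, hy, rfl⟩
      rw [← h3] at hy
      obtain ⟨t, ht, hyt⟩ := mem_biUnion.1 hy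
      exact ⟨t.image (sh v), ⟨t, ht, rfl⟩, Finset.mem_image.2 ⟨y, hyt, rfl⟩⟩

lemma isVTile_image_sh_iff (hk : 2 ≤ k) {t : Finset (ℕ × ℕ)} (h : IsHTile k t ∨ IsVTile k t)
    (v : ℕ) : IsVTile k (t.image (sh v)) ↔ IsVTile k t := by
  rcases h with ⟨i, j, rfl⟩ | ⟨i, j, rfl⟩
  · rw [show ((Finset.range k).image fun s => (i, j + s)) = hT k i j from rfl, image_sh_hT]
    exact iff_of_false (not_isVTile_hT hk i (j + v)) (not_isVTile_hT hk i j)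
  · rw [show ((Finset.range k).image fun s => (i + s, j)) = vT k i j from rfl, image_sh_vT]
    exact iff_of_true (isVTile_vT i (j + v)) (isVTile_vT i j)

open scoped Classical in
lemma vc_image_sh (hk : 2 ≤ k) {T : Finset (Finset (ℕ × ℕ))}
    (h : ∀ t ∈ T, IsHTile k t ∨ IsVTile k t) (v : ℕ) :
    vc k (T.image (fun t => t.image (sh v))) = vc k T := by
  rw [vc_eq_card_filter, vc_eq_card_filter]
  rw [Finset.filter_image]
  rw [Finset.card_image_of_injective _ (Finset.image_injective (sh_injective v))]
  congr 1
  apply Finset.filter_congr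
  intro t ht
  exact isVTile_image_sh_iff hk (h t ht) v

/-- every cell of a region shifted by `v` has column at least `v` -/
lemma col_ge_of_mem_image_sh {R : Finset (ℕ × ℕ)} {p : ℕ × ℕ}
    (hp : p ∈ R.image (sh v)) : v ≤ p.2 := by
  obtain ⟨q, _, rfl⟩ := Finset.mem_image.1 hp
  simp [sh]

lemma cnt_image_sh (hk : 2 ≤ k) (R : Finset (ℕ × ℕ)) (v r : ℕ) :
    cnt k (R.image (sh v)) r = cnt k R r := by
  have hk0 : 0 < k := by omega
  rw [cnt_eq_card, cnt_eq_card]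
  -- per-tile restore lemma
  have tile_restore : ∀ (t : Finset (ℕ × ℕ)), (IsHTile k t ∨ IsVTile k t) →
      t ⊆ R.image (sh v) → (t.image (ush v)).image (sh v) = t ∧
        ((IsHTile k (t.image (ush v)) ∨ IsVTile k (t.image (ush v)))) ∧
        (IsVTile k (t.image (ush v)) ↔ IsVTile k t) := by
    intro t hHV hsub
    have hcol : ∀ p ∈ t, v ≤ p.2 := fun p hp => col_ge_of_mem_image_sh (hsub hp)
    have hrest : (t.image (ush v)).image (sh v) = t := by
      rw [Finset.image_image]
      have : ∀ p ∈ t, (sh v ∘ ush v) p = id p := by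
        intro p hp
        have := hcol p hp
        simp [Function.comp, sh, ush, id, Prod.ext_iff] <;> omega
      rw [Finset.image_congr this, Finset.image_id]
    rcases hHV with ⟨i, j, rfl⟩ | ⟨i, j, rfl⟩
    · have hj : v ≤ j := by
        have := hcol (i, j) ((mem_hT hk0).2 ⟨rfl, le_rfl, by omega⟩)
        simpa using this
      rw [show ((Finset.range k).image fun s => (i, j + s)) = hT k i j from rfl] at hrest ⊢
      rw [image_ush_hT v i j hj]
      exact ⟨by rw [← image_ush_hT v i j hj]; exact hrest,
        Or.inl (isHTile_hT i (j - v)),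
        by simp [not_isVTile_hT hk]⟩
    · have hj : v ≤ j := by
        have := hcol (i, j) ((mem_vT hk0).2 ⟨rfl, le_rfl, by omega⟩)
        simpa using this
      rw [show ((Finset.range k).image fun s => (i + s, j)) = vT k i j from rfl] at hrest ⊢
      rw [image_ush_vT v i j hj]
      exact ⟨by rw [← image_ush_vT v i j hj]; exact hrest,
        Or.inr (isVTile_vT i (j - v)),
        by simp [isVTile_vT]⟩
  have htriv : ∀ t : Finset (ℕ × ℕ), (t.image (sh v)).image (ush v) = t := by
    intro t
    rw [Finset.image_image]
    have : ∀ p ∈ t, (ush v ∘ sh v) p = id p := by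
      intro p hp
      simp [Function.comp, sh, ush, id, Prod.ext_iff] <;> omega
    rw [Finset.image_congr this, Finset.image_id]
  apply Finset.card_bij' (fun T' _ => T'.image (fun t => t.image (ush v)))
    (fun T _ => T.image (fun t => t.image (sh v)))
  · intro T' hT'
    obtain ⟨h1, _⟩ := mem_tilingsF.1 hT'
    rw [Finset.image_image]
    have : ∀ t ∈ T', ((fun t : Finset (ℕ × ℕ) => t.image (sh v)) ∘
        (fun t : Finset (ℕ × ℕ) => t.image (ush v))) t = id t := by
      intro t ht
      exact (tile_restore t (h1.1 t ht) (tile_subset h1 ht)).1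
    rw [Finset.image_congr this, Finset.image_id]
  · intro T _
    rw [Finset.image_image]
    have : ∀ t ∈ T, ((fun t : Finset (ℕ × ℕ) => t.image (ush v)) ∘
        (fun t : Finset (ℕ × ℕ) => t.image (sh v))) t = id t := by
      intro t _
      exact htriv t
    rw [Finset.image_congr this, Finset.image_id]
  · -- main: the unshifted family tiles R
    intro T' hT'
    obtain ⟨h1, h2⟩ := mem_tilingsF.1 hT'
    have hres : ∀ t ∈ T', (t.image (ush v)).image (sh v) = t :=
      fun t ht => (tile_restore t (h1.1 t ht) (tile_subset h1 ht)).1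
    have hmemsh : ∀ t ∈ T', ∀ x, x ∈ t.image (ush v) → sh v x ∈ t := by
      intro t ht x hx
      rw [← hres t ht]
      exact Finset.mem_image_of_mem _ hx
    refine mem_tilingsF.2 ⟨⟨?_, ?_, ?_⟩, ?_⟩
    · intro u hu
      obtain ⟨t, ht, rfl⟩ := Finset.mem_image.1 hu
      exact (tile_restore t (h1.1 t ht) (tile_subset h1 ht)).2.1
    · intro u1 hu1 u2 hu2 hne
      simp only [Finset.coe_image, Set.mem_image, Finset.mem_coe] at hu1 hu2
      obtain ⟨t1, ht1, rfl⟩ := hu1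
      obtain ⟨t2, ht2, rfl⟩ := hu2
      have htne : t1 ≠ t2 := fun he => hne (by rw [he])
      have hd : Disjoint t1 t2 := h1.2.1 (by simpa using ht1) (by simpa using ht2) htne
      refine Finset.disjoint_left.2 fun x hx1 hx2 => ?_
      exact (Finset.disjoint_left.1 hd (hmemsh t1 ht1 x hx1)) (hmemsh t2 ht2 x hx2)
    · ext x
      simp only [mem_biUnion, id, Finset.mem_image]
      constructor
      · rintro ⟨u, ⟨t, ht, rfl⟩, hx⟩
        have : sh v x ∈ t := hmemsh t ht x hx
        have hmem : sh v x ∈ R.image (sh v) := by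
          rw [← h1.2.2] at *
          exact mem_biUnion.2 ⟨t, ht, this⟩
        obtain ⟨z, hz, hze⟩ := Finset.mem_image.1 hmem
        rwa [← sh_injective v hze]
      · intro hx
        have hmem : sh v x ∈ T'.biUnion id := by
          rw [h1.2.2]
          exact Finset.mem_image_of_mem _ hx
        obtain ⟨t, ht, hxt⟩ := mem_biUnion.1 hmem
        refine ⟨t.image (ush v), ⟨t, ht, rfl⟩, Finset.mem_image.2 ⟨sh v x, hxt, ?_⟩⟩
        simp [sh, ush]
    · -- vertical count
      classical
      rw [← h2, vc_eq_card_filter, vc_eq_card_filter, Finset.filter_image]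
      rw [Finset.card_image_of_injOn]
      · congr 1
        apply Finset.filter_congr
        intro t ht
        exact (tile_restore t (h1.1 t ht) (tile_subset h1 ht)).2.2
      · intro t1 hm1 t2 hm2 he
        have h1' := Finset.mem_coe.1 (Finset.mem_of_mem_filter _ hm1)
        have h2' := Finset.mem_coe.1 (Finset.mem_of_mem_filter _ hm2)
        rw [← hres t1 h1', ← hres t2 h2']
        exact congrArg (Finset.image (sh v)) he
  · intro T hT
    obtain ⟨h1, h2⟩ := mem_tilingsF.1 hT
    exact mem_tilingsF.2 ⟨isRT_image_sh hk v h1, by rw [vc_image_sh hk h1.1, h2]⟩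


/-! ## Specialized peel corollaries -/

lemma peel0 (hk : 2 ≤ k) {R : Finset (ℕ × ℕ)} {c : ℕ × ℕ} (hc : c ∈ R)
    (hnone : ∀ t, IsHTile k t ∨ IsVTile k t → c ∈ t → t ⊆ R → False) (r : ℕ) :
    cnt k R r = 0 := by
  rw [peel hk hc ∅ (by simp) (fun t h1 h2 h3 => absurd (hnone t h1 h2 h3) (by simp)) r,
    Finset.sum_empty]

open scoped Classical in
lemma peelH (hk : 2 ≤ k) {R : Finset (ℕ × ℕ)} {c : ℕ × ℕ} (hc : c ∈ R) {i j : ℕ}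
    (hch : c ∈ hT k i j) (hsub : hT k i j ⊆ R)
    (huniq : ∀ t, IsHTile k t ∨ IsVTile k t → c ∈ t → t ⊆ R → t = hT k i j) (r : ℕ) :
    cnt k R r = cnt k (R \ hT k i j) r := by
  rw [peel hk hc {hT k i j}
    (by intro t ht; rw [Finset.mem_singleton] at ht; subst ht
        exact ⟨Or.inl (isHTile_hT i j), hch, hsub⟩)
    (fun t h1 h2 h3 => Finset.mem_singleton.2 (huniq t h1 h2 h3)) r,
    Finset.sum_singleton, if_neg (not_isVTile_hT hk i j)]

open scoped Classical in
lemma peelV (hk : 2 ≤ k) {R : Finset (ℕ × ℕ)} {c : ℕ × ℕ} (hc : c ∈ R) {i j : ℕ}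
    (hcv : c ∈ vT k i j) (hsub : vT k i j ⊆ R)
    (huniq : ∀ t, IsHTile k t ∨ IsVTile k t → c ∈ t → t ⊆ R → t = vT k i j) (r : ℕ) :
    cnt k R r = if r = 0 then 0 else cnt k (R \ vT k i j) (r - 1) := by
  rw [peel hk hc {vT k i j}
    (by intro t ht; rw [Finset.mem_singleton] at ht; subst ht
        exact ⟨Or.inr (isVTile_vT i j), hcv, hsub⟩)
    (fun t h1 h2 h3 => Finset.mem_singleton.2 (huniq t h1 h2 h3)) r,
    Finset.sum_singleton, if_pos (isVTile_vT i j)]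

open scoped Classical in
lemma peelHV (hk : 2 ≤ k) {R : Finset (ℕ × ℕ)} {c : ℕ × ℕ} (hc : c ∈ R) {i1 j1 i2 j2 : ℕ}
    (hch : c ∈ hT k i1 j1) (hsubh : hT k i1 j1 ⊆ R)
    (hcv : c ∈ vT k i2 j2) (hsubv : vT k i2 j2 ⊆ R)
    (huniq : ∀ t, IsHTile k t ∨ IsVTile k t → c ∈ t → t ⊆ R →
      t = hT k i1 j1 ∨ t = vT k i2 j2) (r : ℕ) :
    cnt k R r = cnt k (R \ hT k i1 j1) r +
      (if r = 0 then 0 else cnt k (R \ vT k i2 j2) (r - 1)) := by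
  rw [peel hk hc {hT k i1 j1, vT k i2 j2}
    (by intro t ht
        rcases Finset.mem_insert.1 ht with rfl | ht
        · exact ⟨Or.inl (isHTile_hT i1 j1), hch, hsubh⟩
        · rw [Finset.mem_singleton] at ht; subst ht
          exact ⟨Or.inr (isVTile_vT i2 j2), hcv, hsubv⟩)
    (by intro t h1 h2 h3
        rcases huniq t h1 h2 h3 with rfl | rfl
        · exact Finset.mem_insert_self _ _
        · exact Finset.mem_insert_of_mem (Finset.mem_singleton_self _)) r,
    Finset.sum_pair (hT_ne_vT hk i1 j1 i2 j2),
    if_neg (not_isVTile_hT hk i1 j1), if_pos (isVTile_vT i2 j2)]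

/-! ## Base cases -/

lemma isRT_empty_iff (hk : 2 ≤ k) {T : Finset (Finset (ℕ × ℕ))} :
    IsRT k ∅ T ↔ T = ∅ := by
  constructor
  · intro h
    by_contra hne
    obtain ⟨t, ht⟩ := Finset.nonempty_iff_ne_empty.2 hne
    obtain ⟨x, hx⟩ := tile_nonempty (by omega) (h.1 t ht)
    exact absurd (tile_subset h ht hx) (Finset.notMem_empty x)
  · rintro rfl
    exact ⟨by simp, by simp, by simp⟩

lemma vc_empty : vc k (∅ : Finset (Finset (ℕ × ℕ))) = 0 := by
  classical
  rw [vc_eq_card_filter]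
  simp

lemma cnt_empty (hk : 2 ≤ k) (r : ℕ) : cnt k (∅ : Finset (ℕ × ℕ)) r = if r = 0 then 1 else 0 := by
  classical
  rw [cnt_eq_card]
  have : tilingsF k ∅ r = if r = 0 then {∅} else ∅ := by
    ext T
    rw [mem_tilingsF, isRT_empty_iff hk]
    split_ifs with hr
    · subst hr
      constructor
      · rintro ⟨rfl, _⟩; simp
      · intro hT
        rw [Finset.mem_singleton] at hT
        exact ⟨hT, by rw [hT]; exact vc_empty⟩
    · constructor
      · rintro ⟨rfl, hv⟩
        rw [vc_empty] at hv
        omega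
      · intro h; simp at h
  rw [this]
  split_ifs <;> simp

lemma grid_zero : grid m 0 = (∅ : Finset (ℕ × ℕ)) := by
  simp [grid]

lemma cnt_grid_zero (hk : 2 ≤ k) (m r : ℕ) :
    cnt k (grid m 0) r = if r = 0 then 1 else 0 := by
  rw [grid_zero, cnt_empty hk]

lemma mem_grid {m n : ℕ} {p : ℕ × ℕ} : p ∈ grid m n ↔ p.1 < m ∧ p.2 < n := by
  simp [grid]

variable {m : ℕ}

lemma tile_cases {t : Finset (ℕ × ℕ)} (h : IsHTile k t ∨ IsVTile k t) :
    (∃ i j, t = hT k i j) ∨ (∃ i j, t = vT k i j) := h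

lemma hT_cell (hk0 : 0 < k) (i j s : ℕ) (hs : s < k) : ((i, j + s) : ℕ × ℕ) ∈ hT k i j :=
  Finset.mem_image.2 ⟨s, Finset.mem_range.2 hs, rfl⟩

lemma vT_cell (hk0 : 0 < k) (i j s : ℕ) (hs : s < k) : ((i + s, j) : ℕ × ℕ) ∈ vT k i j :=
  Finset.mem_image.2 ⟨s, Finset.mem_range.2 hs, rfl⟩

lemma cnt_grid_small (hk : 2 ≤ k) (hm1 : k < m) (hm2 : m < 2*k) {n : ℕ}
    (hn1 : 1 ≤ n) (hnk : n < k) (r : ℕ) : cnt k (grid m n) r = 0 := by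
  have hk0 : 0 < k := by omega
  have h1 : cnt k (grid m n) r =
      if r = 0 then 0 else cnt k (grid m n \ vT k 0 0) (r - 1) := by
    apply peelV hk (c := (0, 0))
    · simp [mem_grid]; omega
    · simpa using vT_cell hk0 0 0 0 hk0
    · intro p hp
      rw [mem_vT hk0] at hp
      simp [mem_grid]
      omega
    · intro t h hct hsub
      rcases tile_cases h with ⟨i', j', rfl⟩ | ⟨i', j', rfl⟩
      · exfalso
        rw [mem_hT hk0] at hct
        simp only [Prod.fst, Prod.snd] at hct
        have h2 := hsub (hT_cell hk0 i' j' (k-1) (by omega))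
        simp [mem_grid] at h2 hct
        omega
      · rw [mem_vT hk0] at hct
        simp at hct
        have : i' = 0 := by omega
        have hj : j' = 0 := by omega
        subst this; subst hj; rfl
  rw [h1]
  rcases Nat.eq_zero_or_pos r with rfl | hr
  · simp
  · rw [if_neg (by omega)]
    apply peel0 hk (c := (k, 0))
    · rw [Finset.mem_sdiff, mem_vT hk0]
      simp [mem_grid]
      omega
    · intro t h hct hsub
      rcases tile_cases h with ⟨i', j', rfl⟩ | ⟨i', j', rfl⟩
      · rw [mem_hT hk0] at hct
        simp at hct
        have h2 := hsub (hT_cell hk0 i' j' (k-1) (by omega))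
        rw [Finset.mem_sdiff] at h2
        simp [mem_grid] at h2
        omega
      · rw [mem_vT hk0] at hct
        simp at hct
        have hj : j' = 0 := by omega
        subst hj
        have h2 := hsub (vT_cell hk0 i' 0 0 hk0)
        have h3 := hsub (vT_cell hk0 i' 0 (k-1) (by omega))
        rw [Finset.mem_sdiff, mem_vT hk0] at h2 h3
        simp [mem_grid] at h2 h3
        omega

/-! ## The corridor regions -/

/-- Corridor region: rows `[a, a+k)` are free from column `j` on, the other
rows (within `[0,m)`) are free from column `k` on; all columns `< k + n'`. -/
def Reg (k m a j n' : ℕ) : Finset (ℕ × ℕ) :=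
  (Finset.Ico a (a+k)) ×ˢ (Finset.Ico j (k+n')) ∪
    ((Finset.range m \ Finset.Ico a (a+k)) ×ˢ (Finset.Ico k (k+n')))

lemma mem_Reg {a j n' : ℕ} {p : ℕ × ℕ} : p ∈ Reg k m a j n' ↔
    ((a ≤ p.1 ∧ p.1 < a+k ∧ j ≤ p.2 ∧ p.2 < k+n') ∨
     (p.1 < m ∧ (p.1 < a ∨ a+k ≤ p.1) ∧ k ≤ p.2 ∧ p.2 < k+n')) := by
  simp only [Reg, Finset.mem_union, Finset.mem_product, Finset.mem_Ico, Finset.mem_range,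
    Finset.mem_sdiff]
  omega

lemma mem_image_sh {R : Finset (ℕ × ℕ)} {v : ℕ} {p : ℕ × ℕ} :
    p ∈ R.image (sh v) ↔ v ≤ p.2 ∧ (p.1, p.2 - v) ∈ R := by
  constructor
  · rintro hp
    obtain ⟨q, hq, rfl⟩ := Finset.mem_image.1 hp
    refine ⟨by simp [sh], ?_⟩
    have : (((sh v q).1 , (sh v q).2 - v) : ℕ × ℕ) = q := by
      simp [sh]
    rwa [this]
  · rintro ⟨h1, h2⟩
    refine Finset.mem_image.2 ⟨(p.1, p.2 - v), h2, ?_⟩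
    simp [sh, Prod.ext_iff]
    omega

/-- when `j = k` the corridor region is just a shifted rectangle -/
lemma Reg_k_eq (hk : 2 ≤ k) (ha : a + k ≤ m) (n' : ℕ) :
    Reg k m a k n' = (grid m n').image (sh k) := by
  ext p
  rw [mem_Reg, mem_image_sh, mem_grid]
  simp only
  omega

lemma cnt_Reg_k (hk : 2 ≤ k) {a : ℕ} (ha : a + k ≤ m) (n' r : ℕ) :
    cnt k (Reg k m a k n') r = cnt k (grid m n') r := by
  rw [Reg_k_eq hk ha, cnt_image_sh hk]

/-- corridor with its first `i - a` rows horizontally tiled at columns `[j, j+k)` removed -/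
def QQ (k m a j n' i : ℕ) : Finset (ℕ × ℕ) :=
  Reg k m a j n' \ ((Finset.Ico a i) ×ˢ (Finset.Ico j (j+k)))

/-- `QQ (a+k)` with outside rows `< i` horizontally tiled at columns `[k, 2k)` removed -/
def PP (k m a j n' i : ℕ) : Finset (ℕ × ℕ) :=
  QQ k m a j n' (a+k) \ ((Finset.range i \ Finset.Ico a (a+k)) ×ˢ (Finset.Ico k (2*k)))

lemma mem_QQ {a j n' i : ℕ} {p : ℕ × ℕ} : p ∈ QQ k m a j n' i ↔
    (((a ≤ p.1 ∧ p.1 < a+k ∧ j ≤ p.2 ∧ p.2 < k+n') ∨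
      (p.1 < m ∧ (p.1 < a ∨ a+k ≤ p.1) ∧ k ≤ p.2 ∧ p.2 < k+n')) ∧
     ¬(a ≤ p.1 ∧ p.1 < i ∧ j ≤ p.2 ∧ p.2 < j+k)) := by
  simp only [QQ, Finset.mem_sdiff, mem_Reg, Finset.mem_product, Finset.mem_Ico]
  tauto

lemma mem_PP {a j n' i : ℕ} {p : ℕ × ℕ} : p ∈ PP k m a j n' i ↔
    ((((a ≤ p.1 ∧ p.1 < a+k ∧ j ≤ p.2 ∧ p.2 < k+n') ∨
      (p.1 < m ∧ (p.1 < a ∨ a+k ≤ p.1) ∧ k ≤ p.2 ∧ p.2 < k+n')) ∧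
     ¬(a ≤ p.1 ∧ p.1 < a+k ∧ j ≤ p.2 ∧ p.2 < j+k)) ∧
     ¬((p.1 < i ∧ ¬(a ≤ p.1 ∧ p.1 < a+k)) ∧ k ≤ p.2 ∧ p.2 < 2*k)) := by
  simp only [PP, Finset.mem_sdiff, mem_QQ, Finset.mem_product, Finset.mem_Ico,
    Finset.mem_range] <;> tauto

/-- no vertical tile can sit on the outside rows -/
lemma no_out_vert (hk : 2 ≤ k) (hm2 : m < 2*k) {a : ℕ} (ha : a + k ≤ m) (i' : ℕ)
    (hrow : ∀ s, s < k → (i' + s < m ∧ (i' + s < a ∨ a + k ≤ i' + s))) : False := by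
  have h0 := hrow 0 (by omega)
  have h1 := hrow (k-1) (by omega)
  have h2 := hrow (a - i') (by omega)
  omega

/-- The corridor recurrence. -/
lemma R1 (hk : 2 ≤ k) (hm1 : k < m) (hm2 : m < 2*k) {a j n' : ℕ} (ha : a + k ≤ m)
    (hj1 : 1 ≤ j) (hjk : j < k) (r : ℕ) :
    cnt k (Reg k m a j n') r =
      (if r = 0 then 0 else cnt k (Reg k m a (j+1) n') (r-1)) +
      (if k ≤ n' then cnt k (Reg k m a j (n'-k)) r else 0) := by
  have hk0 : 0 < k := by omega
  have hak : a < k := by omega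
  -- removing the vertical tile at column j
  have hRV : Reg k m a j n' \ vT k a j = Reg k m a (j+1) n' := by
    ext p
    simp only [Finset.mem_sdiff, mem_Reg, mem_vT hk0]
    omega
  -- the subset fact for the vertical tile
  have hsubv : vT k a j ⊆ Reg k m a j n' := by
    intro p hp
    rw [mem_vT hk0] at hp
    simp only [mem_Reg]
    omega
  have hcv : ((a, j) : ℕ × ℕ) ∈ vT k a j := by simpa using vT_cell hk0 a j 0 hk0
  have hcR : ((a, j) : ℕ × ℕ) ∈ Reg k m a j n' := by simp only [mem_Reg]; omega
  by_cases hn : j ≤ n'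
  · -- main case: two choices at (a, j)
    have hch : ((a, j) : ℕ × ℕ) ∈ hT k a j := by simpa using hT_cell hk0 a j 0 hk0
    have hsubh : hT k a j ⊆ Reg k m a j n' := by
      intro p hp
      rw [mem_hT hk0] at hp
      simp only [mem_Reg]
      omega
    have step1 : cnt k (Reg k m a j n') r =
        cnt k (Reg k m a j n' \ hT k a j) r +
        (if r = 0 then 0 else cnt k (Reg k m a j n' \ vT k a j) (r-1)) := by
      apply peelHV hk hcR hch hsubh hcv hsubv
      intro t h hct hsub
      rcases tile_cases h with ⟨i', j', rfl⟩ | ⟨i', j', rfl⟩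
      · left
        rw [mem_hT hk0] at hct
        simp only at hct
        have h2 := hsub (hT_cell hk0 i' j' 0 (by omega))
        simp only [mem_Reg] at h2
        have hi : i' = a := by omega
        have hj : j' = j := by omega
        rw [hi, hj]
      · right
        rw [mem_vT hk0] at hct
        simp only at hct
        have h2 := hsub (vT_cell hk0 i' j' 0 (by omega))
        have h3 := hsub (vT_cell hk0 i' j' (k-1) (by omega))
        simp only [mem_Reg] at h2 h3
        have hi : i' = a := by omega
        have hj : j' = j := by omega
        rw [hi, hj]
    -- corridor chain
    have hQstart : Reg k m a j n' \ hT k a j = QQ k m a j n' (a+1) := by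
      ext p
      simp only [Finset.mem_sdiff, mem_Reg, mem_QQ, mem_hT hk0]
      omega
    have chain : ∀ d i, a + 1 ≤ i → i + d = a + k →
        cnt k (QQ k m a j n' i) r = cnt k (QQ k m a j n' (a+k)) r := by
      intro d
      induction d with
      | zero =>
        intro i _ hie
        have : i = a + k := by omega
        rw [this]
      | succ d ih =>
        intro i hi1 hie
        have hik : i < a + k := by omega
        have hstep : cnt k (QQ k m a j n' i) r = cnt k (QQ k m a j n' i \ hT k i j) r := by
          apply peelH hk (c := (i, j))
          · simp only [mem_QQ]; omega
          · simpa using hT_cell hk0 i j 0 hk0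
          · intro p hp
            rw [mem_hT hk0] at hp
            simp only [mem_QQ]
            omega
          · intro t h hct hsub
            rcases tile_cases h with ⟨i', j', rfl⟩ | ⟨i', j', rfl⟩
            · rw [mem_hT hk0] at hct
              simp only at hct
              have h2 := hsub (hT_cell hk0 i' j' 0 (by omega))
              simp only [mem_QQ] at h2
              have hi : i' = i := by omega
              have hj : j' = j := by omega
              rw [hi, hj]
            · exfalso
              rw [mem_vT hk0] at hct
              simp only at hct
              have h2 := hsub (vT_cell hk0 i' j' 0 (by omega))
              have h3 := hsub (vT_cell hk0 i' j' (k-1) (by omega))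
              simp only [mem_QQ] at h2 h3
              omega
        have hQQ : QQ k m a j n' i \ hT k i j = QQ k m a j n' (i+1) := by
          ext p
          simp only [Finset.mem_sdiff, mem_QQ, mem_hT hk0]
          omega
        rw [hstep, hQQ, ih (i+1) (by omega) (by omega)]
    -- outside rows
    have step3 : cnt k (QQ k m a j n' (a+k)) r =
        if k ≤ n' then cnt k (Reg k m a j (n'-k)) r else 0 := by
      have hPP0 : QQ k m a j n' (a+k) = PP k m a j n' 0 := by
        ext p
        simp only [mem_QQ, mem_PP]
        omega
      by_cases hkn : k ≤ n'
      · rw [if_pos hkn]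
        have chain2 : ∀ d i, i + d = m →
            cnt k (PP k m a j n' i) r = cnt k (PP k m a j n' m) r := by
          intro d
          induction d with
          | zero =>
            intro i hie
            have : i = m := by omega
            rw [this]
          | succ d ih =>
            intro i hie
            have him : i < m := by omega
            by_cases hcor : a ≤ i ∧ i < a + k
            · have : PP k m a j n' (i+1) = PP k m a j n' i := by
                ext p
                simp only [mem_PP]
                omega
              rw [← this, ih (i+1) (by omega)]
            · have hstep : cnt k (PP k m a j n' i) r =
                  cnt k (PP k m a j n' i \ hT k i k) r := by
                apply peelH hk (c := (i, k))
                · simp only [mem_PP]; omega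
                · simpa using hT_cell hk0 i k 0 hk0
                · intro p hp
                  rw [mem_hT hk0] at hp
                  simp only [mem_PP]
                  omega
                · intro t h hct hsub
                  rcases tile_cases h with ⟨i', j', rfl⟩ | ⟨i', j', rfl⟩
                  · rw [mem_hT hk0] at hct
                    simp only at hct
                    have h2 := hsub (hT_cell hk0 i' j' 0 (by omega))
                    simp only [mem_PP] at h2
                    have hi : i' = i := by omega
                    have hj : j' = k := by omega
                    rw [hi, hj]
                  · exfalso
                    rw [mem_vT hk0] at hct
                    simp only at hct
                    refine no_out_vert hk hm2 ha i' (fun s hs => ?_)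
                    have h2 := hsub (vT_cell hk0 i' j' s hs)
                    simp only [mem_PP] at h2
                    omega
              have hPQ : PP k m a j n' i \ hT k i k = PP k m a j n' (i+1) := by
                ext p
                simp only [Finset.mem_sdiff, mem_PP, mem_hT hk0]
                omega
              rw [hstep, hPQ, ih (i+1) (by omega)]
        have hPPm : PP k m a j n' m = (Reg k m a j (n'-k)).image (sh k) := by
          ext p
          simp only [mem_PP, mem_image_sh, mem_Reg]
          omega
        rw [hPP0, chain2 m 0 (by omega), hPPm, cnt_image_sh hk]
      · rw [if_neg hkn]
        obtain ⟨i₀, hi₀m, hi₀c⟩ : ∃ i₀, i₀ < m ∧ (i₀ < a ∨ a + k ≤ i₀) := by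
          rcases Nat.eq_zero_or_pos a with rfl | ha0
          · exact ⟨k, by omega, by omega⟩
          · exact ⟨0, by omega, by omega⟩
        apply peel0 hk (c := (i₀, k))
        · simp only [mem_QQ]; omega
        · intro t h hct hsub
          rcases tile_cases h with ⟨i', j', rfl⟩ | ⟨i', j', rfl⟩
          · rw [mem_hT hk0] at hct
            simp only at hct
            have h2 := hsub (hT_cell hk0 i' j' 0 (by omega))
            have h3 := hsub (hT_cell hk0 i' j' (k-1) (by omega))
            simp only [mem_QQ] at h2 h3
            omega
          · rw [mem_vT hk0] at hct
            simp only at hct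
            refine no_out_vert hk hm2 ha i' (fun s hs => ?_)
            have h2 := hsub (vT_cell hk0 i' j' s hs)
            simp only [mem_QQ] at h2
            omega
    rw [step1, hRV, hQstart, chain (k - 1) (a+1) (by omega) (by omega), step3, add_comm]
  · -- degenerate case `n' < j`: only the vertical tile fits
    have hpeel : cnt k (Reg k m a j n') r =
        if r = 0 then 0 else cnt k (Reg k m a j n' \ vT k a j) (r-1) := by
      apply peelV hk hcR hcv hsubv
      intro t h hct hsub
      rcases tile_cases h with ⟨i', j', rfl⟩ | ⟨i', j', rfl⟩
      · exfalso
        rw [mem_hT hk0] at hct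
        simp only at hct
        have h2 := hsub (hT_cell hk0 i' j' 0 (by omega))
        have h3 := hsub (hT_cell hk0 i' j' (k-1) (by omega))
        simp only [mem_Reg] at h2 h3
        omega
      · rw [mem_vT hk0] at hct
        simp only at hct
        have h2 := hsub (vT_cell hk0 i' j' 0 (by omega))
        have h3 := hsub (vT_cell hk0 i' j' (k-1) (by omega))
        simp only [mem_Reg] at h2 h3
        have hi : i' = a := by omega
        have hj : j' = j := by omega
        rw [hi, hj]
    rw [hpeel, hRV, if_neg (show ¬ k ≤ n' by omega), add_zero]

/-- grid with first `i` rows tiled horizontally at columns `[0,k)` -/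
def GG (k m n i : ℕ) : Finset (ℕ × ℕ) :=
  grid m n \ ((Finset.range i) ×ˢ (Finset.range k))

/-- `GG i` minus vertical tile at `(i,0)` minus horizontal `[0,k)` tiles in rows `[i+k, l)` -/
def WW (k m n i l : ℕ) : Finset (ℕ × ℕ) :=
  (GG k m n i \ vT k i 0) \ ((Finset.Ico (i+k) l) ×ˢ (Finset.range k))

lemma mem_GG {n i : ℕ} {p : ℕ × ℕ} : p ∈ GG k m n i ↔
    (p.1 < m ∧ p.2 < n) ∧ ¬(p.1 < i ∧ p.2 < k) := by
  simp only [GG, Finset.mem_sdiff, mem_grid, Finset.mem_product, Finset.mem_range]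

lemma mem_WW (hk0 : 0 < k) {n i l : ℕ} {p : ℕ × ℕ} : p ∈ WW k m n i l ↔
    (((p.1 < m ∧ p.2 < n) ∧ ¬(p.1 < i ∧ p.2 < k)) ∧
     ¬(p.2 = 0 ∧ i ≤ p.1 ∧ p.1 < i + k)) ∧
     ¬(i + k ≤ p.1 ∧ p.1 < l ∧ p.2 < k) := by
  simp only [WW, Finset.mem_sdiff, mem_GG, mem_vT hk0, Finset.mem_product, Finset.mem_Ico,
    Finset.mem_range]
  omega

/-- The first-column recurrence for the grid. -/
lemma R0 (hk : 2 ≤ k) (hm1 : k < m) (hm2 : m < 2*k) {n : ℕ} (hn : k ≤ n) (r : ℕ) :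
    cnt k (grid m n) r = cnt k (grid m (n-k)) r +
      ∑ a ∈ Finset.range (m-k+1), (if r = 0 then 0 else cnt k (Reg k m a 1 (n-k)) (r-1)) := by
  have hk0 : 0 < k := by omega
  -- the W chain
  have wchain : ∀ i, i + k ≤ m → ∀ r', ∀ d l, i + k ≤ l → l + d = m →
      cnt k (WW k m n i l) r' = cnt k (WW k m n i m) r' := by
    intro i hik r' d
    induction d with
    | zero =>
      intro l _ hle
      have : l = m := by omega
      rw [this]
    | succ d ih =>
      intro l hl1 hle
      have hlm : l < m := by omega
      have hstep : cnt k (WW k m n i l) r' = cnt k (WW k m n i l \ hT k l 0) r' := by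
        apply peelH hk (c := (l, 0))
        · simp only [mem_WW hk0]; omega
        · simpa using hT_cell hk0 l 0 0 hk0
        · intro p hp
          rw [mem_hT hk0] at hp
          simp only [mem_WW hk0]
          omega
        · intro t h hct hsub
          rcases tile_cases h with ⟨i', j', rfl⟩ | ⟨i', j', rfl⟩
          · rw [mem_hT hk0] at hct
            simp only at hct
            have h2 := hsub (hT_cell hk0 i' j' 0 (by omega))
            simp only [mem_WW hk0] at h2
            have hi : i' = l := by omega
            have hj : j' = 0 := by omega
            rw [hi, hj]
          · exfalso
            rw [mem_vT hk0] at hct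
            simp only at hct
            have h2 := hsub (vT_cell hk0 i' j' 0 (by omega))
            have h3 := hsub (vT_cell hk0 i' j' (k-1) (by omega))
            simp only [mem_WW hk0] at h2 h3
            omega
      have hWQ : WW k m n i l \ hT k l 0 = WW k m n i (l+1) := by
        ext p
        simp only [Finset.mem_sdiff, mem_WW hk0, mem_hT hk0]
        omega
      rw [hstep, hWQ, ih (l+1) (by omega) (by omega)]
  -- identify endpoints of W chain
  have wstart : ∀ i, GG k m n i \ vT k i 0 = WW k m n i (i+k) := by
    intro i
    ext p
    simp only [Finset.mem_sdiff, mem_GG, mem_vT hk0, mem_WW hk0]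
    omega
  have wend : ∀ i, i + k ≤ m → WW k m n i m = Reg k m i 1 (n-k) := by
    intro i hik
    ext p
    simp only [mem_WW hk0, mem_Reg]
    omega
  -- the main chain
  have mchain : ∀ d i, i + d = m →
      cnt k (GG k m n i) r = cnt k (GG k m n m) r +
        ∑ a ∈ Finset.Ico i (m-k+1), (if r = 0 then 0 else cnt k (Reg k m a 1 (n-k)) (r-1)) := by
    intro d
    induction d with
    | zero =>
      intro i hie
      have hi : i = m := by omega
      rw [hi, Finset.Ico_eq_empty (by omega), Finset.sum_empty, add_zero]
    | succ d ih =>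
      intro i hie
      have him : i < m := by omega
      by_cases hik : i + k ≤ m
      · -- both tiles possible at (i, 0)
        have hstep : cnt k (GG k m n i) r = cnt k (GG k m n i \ hT k i 0) r +
            (if r = 0 then 0 else cnt k (GG k m n i \ vT k i 0) (r-1)) := by
          apply peelHV hk (c := (i, 0))
          · simp only [mem_GG]; omega
          · simpa using hT_cell hk0 i 0 0 hk0
          · intro p hp
            rw [mem_hT hk0] at hp
            simp only [mem_GG]
            omega
          · simpa using vT_cell hk0 i 0 0 hk0
          · intro p hp
            rw [mem_vT hk0] at hp
            simp only [mem_GG]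
            omega
          · intro t h hct hsub
            rcases tile_cases h with ⟨i', j', rfl⟩ | ⟨i', j', rfl⟩
            · left
              rw [mem_hT hk0] at hct
              simp only at hct
              have h2 := hsub (hT_cell hk0 i' j' 0 (by omega))
              simp only [mem_GG] at h2
              have hi : i' = i := by omega
              have hj : j' = 0 := by omega
              rw [hi, hj]
            · right
              rw [mem_vT hk0] at hct
              simp only at hct
              have h2 := hsub (vT_cell hk0 i' j' 0 (by omega))
              simp only [mem_GG] at h2
              have hi : i' = i := by omega
              have hj : j' = 0 := by omega
              rw [hi, hj]
        have hGH : GG k m n i \ hT k i 0 = GG k m n (i+1) := by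
          ext p
          simp only [Finset.mem_sdiff, mem_GG, mem_hT hk0]
          omega
        have hvreg : cnt k (GG k m n i \ vT k i 0) (r-1) = cnt k (Reg k m i 1 (n-k)) (r-1) := by
          rw [wstart i, wchain i hik (r-1) (m - (i+k)) (i+k) le_rfl (by omega), wend i hik]
        rw [hstep, hGH, ih (i+1) (by omega),
          Finset.sum_eq_sum_Ico_succ_bot (show i < m-k+1 by omega)]
        rcases Nat.eq_zero_or_pos r with rfl | hr
        · simp
        · rw [if_neg (by omega), if_neg (by omega), hvreg]
          omega
      · -- only horizontal fits
        have hstep : cnt k (GG k m n i) r = cnt k (GG k m n i \ hT k i 0) r := by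
          apply peelH hk (c := (i, 0))
          · simp only [mem_GG]; omega
          · simpa using hT_cell hk0 i 0 0 hk0
          · intro p hp
            rw [mem_hT hk0] at hp
            simp only [mem_GG]
            omega
          · intro t h hct hsub
            rcases tile_cases h with ⟨i', j', rfl⟩ | ⟨i', j', rfl⟩
            · rw [mem_hT hk0] at hct
              simp only at hct
              have h2 := hsub (hT_cell hk0 i' j' 0 (by omega))
              simp only [mem_GG] at h2
              have hi : i' = i := by omega
              have hj : j' = 0 := by omega
              rw [hi, hj]
            · exfalso
              rw [mem_vT hk0] at hct
              simp only at hct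
              have h2 := hsub (vT_cell hk0 i' j' 0 (by omega))
              have h3 := hsub (vT_cell hk0 i' j' (k-1) (by omega))
              simp only [mem_GG] at h2 h3
              omega
        have hGH : GG k m n i \ hT k i 0 = GG k m n (i+1) := by
          ext p
          simp only [Finset.mem_sdiff, mem_GG, mem_hT hk0]
          omega
        rw [hstep, hGH, ih (i+1) (by omega), Finset.Ico_eq_empty (show ¬ i < m-k+1 by omega),
          Finset.Ico_eq_empty (show ¬ i+1 < m-k+1 by omega)]
      -- done
  have hG0 : GG k m n 0 = grid m n := by
    ext p
    simp only [mem_GG, mem_grid]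
    omega
  have hGm : GG k m n m = (grid m (n-k)).image (sh k) := by
    ext p
    simp only [mem_GG, mem_image_sh, mem_grid]
    omega
  have := mchain m 0 (by omega)
  rw [hG0, hGm, cnt_image_sh hk] at this
  rw [this, Finset.range_eq_Ico]

/-! ## Part III : generating functions -/

open MvPowerSeries Finsupp

/-- generating function of corridor-region counts -/
noncomputable def Eser (k m a j : ℕ) : MvPowerSeries (Fin 2) ℚ :=
  fun d => (cnt k (Reg k m a j (d 0)) (d 1) : ℚ)

lemma coeff_Eser {a j : ℕ} (d : Fin 2 →₀ ℕ) :
    MvPowerSeries.coeff d (Eser k m a j) = (cnt k (Reg k m a j (d 0)) (d 1) : ℚ) := rfl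

lemma coeff_GF (d : Fin 2 →₀ ℕ) :
    MvPowerSeries.coeff d (tilingsVertGF m k) = (cnt k (grid m (d 0)) (d 1) : ℚ) := by
  have : numTilingsVert m (d 0) k (d 1) = cnt k (grid m (d 0)) (d 1) := numTilingsVert_eq _ _ _
  simp only [MvPowerSeries.coeff_apply, tilingsVertGF, this]

/- Finsupp helpers on `Fin 2` -/

lemma fs_le0 {u : ℕ} {d : Fin 2 →₀ ℕ} : Finsupp.single (0 : Fin 2) u ≤ d ↔ u ≤ d 0 :=
  Finsupp.single_le_iff

lemma fs_le01 {u v : ℕ} {d : Fin 2 →₀ ℕ} :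
    Finsupp.single (0 : Fin 2) u + Finsupp.single 1 v ≤ d ↔ u ≤ d 0 ∧ v ≤ d 1 := by
  rw [Finsupp.le_def]
  constructor
  · intro h
    constructor
    · have := h 0; simpa using this
    · have := h 1; simpa using this
  · rintro ⟨h1, h2⟩ i
    fin_cases i <;> simp [Finsupp.add_apply, Finsupp.single_apply] <;> omega

lemma fs_le1 {v : ℕ} {d : Fin 2 →₀ ℕ} : Finsupp.single (1 : Fin 2) v ≤ d ↔ v ≤ d 1 :=
  Finsupp.single_le_iff

lemma fs_sub0_0 {u : ℕ} {d : Fin 2 →₀ ℕ} : (d - Finsupp.single (0 : Fin 2) u) 0 = d 0 - u := by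
  rw [Finsupp.tsub_apply, Finsupp.single_eq_same]

lemma fs_sub0_1 {u : ℕ} {d : Fin 2 →₀ ℕ} : (d - Finsupp.single (0 : Fin 2) u) 1 = d 1 := by
  rw [Finsupp.tsub_apply, Finsupp.single_eq_of_ne (by decide), tsub_zero]

lemma fs_sub1_0 {v : ℕ} {d : Fin 2 →₀ ℕ} : (d - Finsupp.single (1 : Fin 2) v) 0 = d 0 := by
  rw [Finsupp.tsub_apply, Finsupp.single_eq_of_ne (by decide), tsub_zero]

lemma fs_sub1_1 {v : ℕ} {d : Fin 2 →₀ ℕ} : (d - Finsupp.single (1 : Fin 2) v) 1 = d 1 - v := by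
  rw [Finsupp.tsub_apply, Finsupp.single_eq_same]

lemma fs_sub01_0 {u v : ℕ} {d : Fin 2 →₀ ℕ} :
    (d - (Finsupp.single (0 : Fin 2) u + Finsupp.single (1 : Fin 2) v : Fin 2 →₀ ℕ)) 0
      = d 0 - u := by
  rw [Finsupp.tsub_apply, Finsupp.add_apply, Finsupp.single_eq_same,
    Finsupp.single_eq_of_ne (by decide), add_zero]

lemma fs_sub01_1 {u v : ℕ} {d : Fin 2 →₀ ℕ} :
    (d - (Finsupp.single (0 : Fin 2) u + Finsupp.single (1 : Fin 2) v : Fin 2 →₀ ℕ)) 1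
      = d 1 - v := by
  rw [Finsupp.tsub_apply, Finsupp.add_apply, Finsupp.single_eq_same,
    Finsupp.single_eq_of_ne (by decide), zero_add]

lemma fs_eq_zero {d : Fin 2 →₀ ℕ} : d = 0 ↔ d 0 = 0 ∧ d 1 = 0 := by
  constructor
  · rintro rfl; simp
  · rintro ⟨h1, h2⟩
    ext i
    fin_cases i <;> simpa

/- coefficient extraction for monomial multiples -/

lemma coeff_mono_mul (e d : Fin 2 →₀ ℕ) (F : MvPowerSeries (Fin 2) ℚ) :
    MvPowerSeries.coeff d (MvPowerSeries.monomial e 1 * F) =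
      if e ≤ d then MvPowerSeries.coeff (d - e) F else 0 := by
  rw [MvPowerSeries.coeff_monomial_mul]
  split_ifs <;> simp

lemma coeff_Xk_mul (F : MvPowerSeries (Fin 2) ℚ) (d : Fin 2 →₀ ℕ) :
    MvPowerSeries.coeff d ((MvPowerSeries.X 0) ^ k * F) =
      if k ≤ d 0 then MvPowerSeries.coeff (d - Finsupp.single 0 k) F else 0 := by
  rw [MvPowerSeries.X_pow_eq, coeff_mono_mul]
  simp only [fs_le0]

lemma coeff_X1_mul (F : MvPowerSeries (Fin 2) ℚ) (d : Fin 2 →₀ ℕ) :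
    MvPowerSeries.coeff d ((MvPowerSeries.X 1) * F) =
      if 1 ≤ d 1 then MvPowerSeries.coeff (d - Finsupp.single 1 1) F else 0 := by
  have : (MvPowerSeries.X 1 : MvPowerSeries (Fin 2) ℚ) = monomial (Finsupp.single 1 1) 1 := by
    rw [← pow_one (MvPowerSeries.X 1 : MvPowerSeries (Fin 2) ℚ), MvPowerSeries.X_pow_eq]
  rw [this, coeff_mono_mul]
  simp only [fs_le1]

lemma coeff_XkX1_mul (F : MvPowerSeries (Fin 2) ℚ) (d : Fin 2 →₀ ℕ) :
    MvPowerSeries.coeff d ((MvPowerSeries.X 0) ^ k * MvPowerSeries.X 1 * F) =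
      if k ≤ d 0 ∧ 1 ≤ d 1 then
        MvPowerSeries.coeff (d - (Finsupp.single 0 k + Finsupp.single 1 1)) F else 0 := by
  have h1 : (MvPowerSeries.X 0 : MvPowerSeries (Fin 2) ℚ) ^ k * MvPowerSeries.X 1 =
      monomial (Finsupp.single 0 k + Finsupp.single 1 1) 1 := by
    rw [MvPowerSeries.X_pow_eq, ← pow_one (MvPowerSeries.X 1 : MvPowerSeries (Fin 2) ℚ),
      MvPowerSeries.X_pow_eq, MvPowerSeries.monomial_mul_monomial, one_mul]
  rw [h1, coeff_mono_mul]
  simp only [fs_le01]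

/-- series-level corridor recurrence -/
lemma P1 (hk : 2 ≤ k) (hm1 : k < m) (hm2 : m < 2*k) {a j : ℕ} (ha : a + k ≤ m)
    (hj1 : 1 ≤ j) (hjk : j < k) :
    (1 - MvPowerSeries.X 0 ^ k) * Eser k m a j = MvPowerSeries.X 1 * Eser k m a (j+1) := by
  apply MvPowerSeries.ext
  intro d
  rw [sub_mul, one_mul, map_sub, coeff_Xk_mul, coeff_X1_mul, coeff_Eser, coeff_Eser, coeff_Eser,
    fs_sub0_0, fs_sub0_1, fs_sub1_0, fs_sub1_1]
  have hrec := R1 hk hm1 hm2 ha hj1 hjk (n' := d 0) (d 1)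
  rw [hrec, Nat.cast_add]
  split_ifs <;> first | (exfalso; omega) | (push_cast; ring)

/-- series-level first-column recurrence -/
lemma P3 (hk : 2 ≤ k) (hm1 : k < m) (hm2 : m < 2*k) :
    (1 - MvPowerSeries.X 0 ^ k) * tilingsVertGF m k =
      1 + (MvPowerSeries.X 0 ^ k * MvPowerSeries.X 1) *
        (∑ a ∈ Finset.range (m-k+1), Eser k m a 1) := by
  apply MvPowerSeries.ext
  intro d
  rw [sub_mul, one_mul, map_sub, map_add, coeff_Xk_mul, coeff_XkX1_mul, coeff_GF, coeff_GF,
    MvPowerSeries.coeff_one, fs_sub0_0, fs_sub0_1, map_sum]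
  simp only [coeff_Eser, fs_sub01_0, fs_sub01_1, fs_eq_zero]
  by_cases hkd : k ≤ d 0
  · have hrec := R0 hk hm1 hm2 (n := d 0) hkd (d 1)
    rw [if_pos hkd, hrec, Nat.cast_add, Nat.cast_sum,
      if_neg (show ¬(d 0 = 0 ∧ d 1 = 0) by omega)]
    by_cases h1 : d 1 = 0
    · rw [if_neg (show ¬(k ≤ d 0 ∧ 1 ≤ d 1) by omega)]
      simp [h1]
    · rw [if_pos (show k ≤ d 0 ∧ 1 ≤ d 1 by omega)]
      simp only [if_neg h1]
      push_cast
      ring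
  · rw [if_neg hkd, if_neg (show ¬(k ≤ d 0 ∧ 1 ≤ d 1) by omega), add_zero, sub_zero]
    rcases Nat.eq_zero_or_pos (d 0) with hd0 | hd0
    · rw [hd0, cnt_grid_zero hk]
      by_cases h1 : d 1 = 0
      · rw [if_pos h1, if_pos ⟨rfl, h1⟩]
        norm_num
      · rw [if_neg h1, if_neg (show ¬((0:ℕ) = 0 ∧ d 1 = 0) by omega)]
        norm_num
    · rw [cnt_grid_small hk hm1 hm2 (show 1 ≤ d 0 by omega) (show d 0 < k by omega),
        if_neg (show ¬(d 0 = 0 ∧ d 1 = 0) by omega)]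
      norm_num


lemma Eser_k_eq (hk : 2 ≤ k) (hm1 : k < m) {a : ℕ} (ha : a + k ≤ m) :
    Eser k m a k = tilingsVertGF m k := by
  apply MvPowerSeries.ext
  intro d
  rw [coeff_Eser, coeff_GF, cnt_Reg_k hk ha]

lemma P2 (hk : 2 ≤ k) (hm1 : k < m) (hm2 : m < 2*k) {a : ℕ} (ha : a + k ≤ m) :
    ∀ t, t ≤ k - 1 →
      (1 - MvPowerSeries.X 0 ^ k)^t * Eser k m a (k - t) =
        (MvPowerSeries.X 1)^t * tilingsVertGF m k := by
  intro t
  induction t with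
  | zero =>
    intro _
    rw [Nat.sub_zero, pow_zero, pow_zero, one_mul, one_mul, Eser_k_eq hk hm1 ha]
  | succ t ih =>
    intro ht
    have hj1 : 1 ≤ k - (t+1) := by omega
    have hjk : k - (t+1) < k := by omega
    have hjsucc : k - (t+1) + 1 = k - t := by omega
    have hP1 := P1 hk hm1 hm2 ha hj1 hjk
    rw [hjsucc] at hP1
    calc (1 - MvPowerSeries.X 0 ^ k)^(t+1) * Eser k m a (k - (t+1))
        = (1 - MvPowerSeries.X 0 ^ k)^t *
            ((1 - MvPowerSeries.X 0 ^ k) * Eser k m a (k - (t+1))) := by ring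
      _ = (1 - MvPowerSeries.X 0 ^ k)^t * (MvPowerSeries.X 1 * Eser k m a (k - t)) := by
          rw [hP1]
      _ = MvPowerSeries.X 1 * ((1 - MvPowerSeries.X 0 ^ k)^t * Eser k m a (k - t)) := by ring
      _ = MvPowerSeries.X 1 * ((MvPowerSeries.X 1)^t * tilingsVertGF m k) := by
          rw [ih (by omega)]
      _ = (MvPowerSeries.X 1)^(t+1) * tilingsVertGF m k := by ring

theorem main (hk : 2 ≤ k) (hm1 : k < m) (hm2 : m < 2 * k) :
    ((1 - MvPowerSeries.X 0 ^ k) ^ k -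
          ((m - k + 1 : ℕ) : MvPowerSeries (Fin 2) ℚ) *
            MvPowerSeries.X 0 ^ k * MvPowerSeries.X 1 ^ k) *
        tilingsVertGF m k =
      (1 - MvPowerSeries.X 0 ^ k) ^ (k - 1) := by
  set X0 : MvPowerSeries (Fin 2) ℚ := MvPowerSeries.X 0 with hX0
  set X1 : MvPowerSeries (Fin 2) ℚ := MvPowerSeries.X 1 with hX1
  set G : MvPowerSeries (Fin 2) ℚ := tilingsVertGF m k with hG
  set S : MvPowerSeries (Fin 2) ℚ := ∑ a ∈ Finset.range (m-k+1), Eser k m a 1 with hSdef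
  have hS : (1 - X0 ^ k)^(k-1) * S = ((m - k + 1 : ℕ) : MvPowerSeries (Fin 2) ℚ) *
      (X1^(k-1) * G) := by
    rw [hSdef, Finset.mul_sum]
    rw [Finset.sum_congr rfl (fun a haa => ?_)]
    · rw [Finset.sum_const, Finset.card_range, nsmul_eq_mul]
    · have ha : a + k ≤ m := by
        have := Finset.mem_range.1 haa
        omega
      have := P2 hk hm1 hm2 ha (k-1) le_rfl
      rw [show k - (k-1) = 1 by omega] at this
      rw [this]
  have key : (1 - X0 ^ k)^k * G = (1 - X0 ^ k)^(k-1) +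
      ((m - k + 1 : ℕ) : MvPowerSeries (Fin 2) ℚ) * X0^k * X1^k * G := by
    have h1 : (1 - X0 ^ k)^k = (1 - X0 ^ k)^(k-1) * (1 - X0 ^ k) := by
      rw [← pow_succ]
      congr 1
      omega
    rw [h1, mul_assoc, P3 hk hm1 hm2, mul_add, mul_one]
    congr 1
    rw [show (1 - X0 ^ k)^(k-1) * ((X0^k * X1) * S) = (X0^k * X1) * ((1 - X0 ^ k)^(k-1) * S)
      by ring, hS]
    have hX1k : X1 ^ k = X1 * X1^(k-1) := by
      rw [← pow_succ']
      congr 1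
      omega
    rw [hX1k]
    ring
  rw [sub_mul, key]
  ring
end Stmt14

theorem stmt_14 (k m : ℕ) (hk : 2 ≤ k) (h1 : k < m) (h2 : m < 2 * k) :
    ((1 - MvPowerSeries.X 0 ^ k) ^ k -
          ((m - k + 1 : ℕ) : MvPowerSeries (Fin 2) ℚ) *
            MvPowerSeries.X 0 ^ k * MvPowerSeries.X 1 ^ k) *
        tilingsVertGF m k =
      (1 - MvPowerSeries.X 0 ^ k) ^ (k - 1) :=
  Stmt14.main hk h1 h2
end

section
/- Suppose k ≥ 2 and k < m < 2k. The number of fault-free tilings of an m×k rectangle by tiles of sizes k×1 and k×k equals 2m − 2k + 3. -/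
/-- A `k × k` square tile. -/
def IsSqTile (k : ℕ) (t : Finset (ℕ × ℕ)) : Prop :=
  ∃ i j : ℕ, t = (Finset.range k ×ˢ Finset.range k).image fun p => (i + p.1, j + p.2)

/-- A tiling of the `m × n` rectangle by `k × 1` and `k × k` tiles. -/
def IsTiling' (m n k : ℕ) (T : Finset (Finset (ℕ × ℕ))) : Prop :=
  (∀ t ∈ T, IsHTile k t ∨ IsVTile k t ∨ IsSqTile k t) ∧
  (T : Set (Finset (ℕ × ℕ))).PairwiseDisjoint id ∧
  T.biUnion id = grid m n

/-- The number of fault-free tilings of the `m × n` rectangle by `k × 1` and `k × k` tiles. -/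
noncomputable def numFFTilings' (m n k : ℕ) : ℕ :=
  Nat.card {T : Finset (Finset (ℕ × ℕ)) // IsTiling' m n k T ∧ FaultFree n T}

/-!
Since `m < 2k`, every vertical or square tile meets row `m - k`. Let `R` be the tile through the
pivot cell `(m - k, 0)`. Any tile through a cell `(x, 0)` other than the horizontal tile of row
`x` contains the pivot, so every row of the rectangle not met by `R` is a horizontal tile. Hence
the tiling is determined by `R`: all tiles are horizontal, or the rows `i, …, i + k - 1` carry a
square (resp. `k` vertical tiles) and all other rows are horizontal. Distinct `R` give distinct
tilings, so there are `1 + 2 (m - k + 1)` of them. As `R` has at most `k < m` cells in column `0`,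
some row is a horizontal tile, and it crosses every vertical line: every tiling is fault-free.
-/

@[simp] lemma mem_grid {m n : ℕ} {c : ℕ × ℕ} : c ∈ grid m n ↔ c.1 < m ∧ c.2 < n := by
  simp [grid]

namespace IsTiling'

variable {m n k : ℕ} {S T : Finset (Finset (ℕ × ℕ))}

lemma exists_mem (hT : IsTiling' m n k T) {c : ℕ × ℕ} (hc : c ∈ grid m n) :
    ∃ t ∈ T, c ∈ t := by
  rw [← hT.2.2] at hc
  simpa using hc

lemma eq_of_mem (hT : IsTiling' m n k T) {t t' : Finset (ℕ × ℕ)} (ht : t ∈ T)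
    (ht' : t' ∈ T) {c : ℕ × ℕ} (hc : c ∈ t) (hc' : c ∈ t') : t = t' := by
  by_contra hne
  exact Finset.disjoint_left.mp (hT.2.1 ht ht' hne) hc hc'

lemma subset_grid (hT : IsTiling' m n k T) {t : Finset (ℕ × ℕ)} (ht : t ∈ T) :
    t ⊆ grid m n :=
  hT.2.2 ▸ Finset.subset_biUnion_of_mem id ht

lemma nonempty (hk : 0 < k) (hT : IsTiling' m n k T) {t : Finset (ℕ × ℕ)} (ht : t ∈ T) :
    t.Nonempty := by
  rcases hT.1 t ht with ⟨i, j, rfl⟩ | ⟨i, j, rfl⟩ | ⟨i, j, rfl⟩ <;> simp [hk.ne']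

lemma eq_of_subset (hk : 0 < k) (hS : IsTiling' m n k S) (hT : IsTiling' m n k T) (hST : S ⊆ T) :
    S = T := by
  refine hST.antisymm fun t ht => ?_
  obtain ⟨c, hc⟩ := hT.nonempty hk ht
  obtain ⟨s, hs, hcs⟩ := hS.exists_mem (hT.subset_grid ht hc)
  rwa [hT.eq_of_mem ht (hST hs) hc hcs]

end IsTiling'

namespace KTiling

open Finset

variable {k m : ℕ} {T : Finset (Finset (ℕ × ℕ))}

def row (k x : ℕ) : Finset (ℕ × ℕ) := {x} ×ˢ range k

def column (k i j : ℕ) : Finset (ℕ × ℕ) := Ico i (i + k) ×ˢ {j}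

def block (k i : ℕ) : Finset (ℕ × ℕ) := Ico i (i + k) ×ˢ range k

@[simp] lemma mem_row {x : ℕ} {c : ℕ × ℕ} : c ∈ row k x ↔ c.1 = x ∧ c.2 < k := by
  simp only [row, mem_product, mem_singleton, mem_range]

@[simp] lemma mem_column {i j : ℕ} {c : ℕ × ℕ} :
    c ∈ column k i j ↔ i ≤ c.1 ∧ c.1 < i + k ∧ c.2 = j := by
  simp only [column, mem_product, mem_Ico, mem_singleton, and_assoc]

@[simp] lemma mem_block {i : ℕ} {c : ℕ × ℕ} :
    c ∈ block k i ↔ i ≤ c.1 ∧ c.1 < i + k ∧ c.2 < k := by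
  simp [block, and_assoc]

@[simp] lemma mem_image_horizontal {i j a b : ℕ} :
    (a, b) ∈ (range k).image (fun s => (i, j + s)) ↔ a = i ∧ j ≤ b ∧ b < j + k := by
  simp only [mem_image, mem_range, Prod.mk.injEq]
  exact ⟨fun ⟨s, hs, ha, hb⟩ => by omega,
    fun ⟨ha, hb, hb'⟩ => ⟨b - j, by omega, ha.symm, by omega⟩⟩

@[simp] lemma mem_image_vertical {i j a b : ℕ} :
    (a, b) ∈ (range k).image (fun s => (i + s, j)) ↔ i ≤ a ∧ a < i + k ∧ b = j := by
  simp only [mem_image, mem_range, Prod.mk.injEq]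
  exact ⟨fun ⟨s, hs, ha, hb⟩ => by omega,
    fun ⟨ha, ha', hb⟩ => ⟨a - i, by omega, by omega, hb.symm⟩⟩

@[simp] lemma mem_image_square {i j a b : ℕ} :
    (a, b) ∈ (range k ×ˢ range k).image (fun p => (i + p.1, j + p.2)) ↔
      i ≤ a ∧ a < i + k ∧ j ≤ b ∧ b < j + k := by
  simp only [mem_image, mem_product, mem_range, Prod.exists, Prod.mk.injEq]
  exact ⟨fun ⟨p, q, ⟨hp, hq⟩, ha, hb⟩ => by omega,
    fun ⟨ha, ha', hb, hb'⟩ =>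
      ⟨a - i, b - j, ⟨by omega, by omega⟩, by omega, by omega⟩⟩

lemma isHTile_row (x : ℕ) : IsHTile k (row k x) :=
  ⟨x, 0, by ext ⟨a, b⟩; simp only [mem_row, mem_image_horizontal]; omega⟩

lemma isVTile_column (i j : ℕ) : IsVTile k (column k i j) :=
  ⟨i, j, by ext ⟨a, b⟩; simp only [mem_column, mem_image_vertical]⟩

lemma isSqTile_block (i : ℕ) : IsSqTile k (block k i) :=
  ⟨i, 0, by ext ⟨a, b⟩; simp only [mem_block, mem_image_square]; omega⟩

lemma row_ne_column (hk : 2 ≤ k) (x i j : ℕ) : row k x ≠ column k i j := by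
  intro h
  have h₀ : (x, 0) ∈ column k i j := h ▸ mem_row.2 ⟨rfl, by omega⟩
  have h₁ : (x, 1) ∈ column k i j := h ▸ mem_row.2 ⟨rfl, by omega⟩
  exact zero_ne_one ((mem_column.1 h₀).2.2.trans (mem_column.1 h₁).2.2.symm)

lemma row_ne_block (hk : 2 ≤ k) (x i : ℕ) : row k x ≠ block k i := by
  intro h
  have h₀ : (i, 0) ∈ row k x := h ▸ mem_block.2 ⟨le_rfl, by omega, by omega⟩
  have h₁ : (i + 1, 0) ∈ row k x := h ▸ mem_block.2 ⟨by omega, by omega, by omega⟩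
  have := (mem_row.1 h₀).1.trans (mem_row.1 h₁).1.symm
  omega

lemma block_ne_column (hk : 2 ≤ k) (i i' j : ℕ) : block k i ≠ column k i' j := by
  intro h
  have h₀ : (i, 0) ∈ column k i' j := h ▸ mem_block.2 ⟨le_rfl, by omega, by omega⟩
  have h₁ : (i, 1) ∈ column k i' j := h ▸ mem_block.2 ⟨le_rfl, by omega, by omega⟩
  exact zero_ne_one ((mem_column.1 h₀).2.2.trans (mem_column.1 h₁).2.2.symm)

lemma block_injective (hk : 0 < k) : Function.Injective (block k) := by
  intro i i' h
  have h₀ : (i, 0) ∈ block k i' := h ▸ mem_block.2 ⟨le_rfl, by omega, hk⟩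
  have h₁ : (i', 0) ∈ block k i := h ▸ mem_block.2 ⟨le_rfl, by omega, hk⟩
  exact le_antisymm (mem_block.1 h₁).1 (mem_block.1 h₀).1

lemma column_injective (hk : 0 < k) (j : ℕ) : Function.Injective fun i => column k i j := by
  intro i i' (h : column k i j = column k i' j)
  have h₀ : (i, j) ∈ column k i' j := h ▸ mem_column.2 ⟨le_rfl, by omega, rfl⟩
  have h₁ : (i', j) ∈ column k i j := h ▸ mem_column.2 ⟨le_rfl, by omega, rfl⟩
  exact le_antisymm (mem_column.1 h₁).1 (mem_column.1 h₀).1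

lemma tile_cases (hk : 0 < k) (hT : IsTiling' m k k T) {t : Finset (ℕ × ℕ)} (ht : t ∈ T) :
    (∃ x < m, t = row k x) ∨ (∃ i j, i + k ≤ m ∧ j < k ∧ t = column k i j) ∨
      ∃ i, i + k ≤ m ∧ t = block k i := by
  have hsub := hT.subset_grid ht
  rcases hT.1 t ht with ⟨i, j, rfl⟩ | ⟨i, j, rfl⟩ | ⟨i, j, rfl⟩
  · have hlast := hsub (x := (i, j + k - 1)) (by simp only [mem_image_horizontal, true_and]; omega)
    obtain ⟨hi, rfl⟩ : i < m ∧ j = 0 := by simp only [mem_grid] at hlast; omega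
    refine Or.inl ⟨i, hi, ?_⟩
    ext ⟨a, b⟩
    simp only [mem_row, mem_image_horizontal]
    omega
  · have hlast := hsub (x := (i + k - 1, j)) (by simp only [mem_image_vertical, and_true]; omega)
    simp only [mem_grid] at hlast
    refine Or.inr (Or.inl ⟨i, j, by omega, by omega, ?_⟩)
    ext ⟨a, b⟩
    simp only [mem_column, mem_image_vertical]
  · have hlast := hsub (x := (i + k - 1, j + k - 1)) (by simp only [mem_image_square]; omega)
    obtain ⟨hi, rfl⟩ : i + k ≤ m ∧ j = 0 := by simp only [mem_grid] at hlast; omega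
    refine Or.inr (Or.inr ⟨i, hi, ?_⟩)
    ext ⟨a, b⟩
    simp only [mem_block, mem_image_square]
    omega

lemma pairwiseDisjoint_image_row (s : Finset ℕ) :
    (s.image (row k) : Set (Finset (ℕ × ℕ))).PairwiseDisjoint id := by
  rw [coe_image]
  rintro _ ⟨x, -, rfl⟩ _ ⟨y, -, rfl⟩ hne
  refine disjoint_left.2 fun c hx hy => hne ?_
  simp only [id_eq, mem_row] at hx hy
  rw [← hx.1, ← hy.1]

lemma pairwiseDisjoint_image_column (s : Finset ℕ) (i : ℕ) :
    (s.image (column k i) : Set (Finset (ℕ × ℕ))).PairwiseDisjoint id := by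
  rw [coe_image]
  rintro _ ⟨j, -, rfl⟩ _ ⟨j', -, rfl⟩ hne
  refine disjoint_left.2 fun c hj hj' => hne ?_
  simp only [id_eq, mem_column] at hj hj'
  rw [← hj.2.2, ← hj'.2.2]

def rowsOutside (m k i : ℕ) : Finset (Finset (ℕ × ℕ)) :=
  (range m \ Ico i (i + k)).image (row k)

def rowTiling (m k : ℕ) : Finset (Finset (ℕ × ℕ)) := (range m).image (row k)

def squareTiling (m k i : ℕ) : Finset (Finset (ℕ × ℕ)) := {block k i} ∪ rowsOutside m k i

def columnTiling (m k i : ℕ) : Finset (Finset (ℕ × ℕ)) :=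
  (range k).image (column k i) ∪ rowsOutside m k i

lemma biUnion_rowsOutside {i : ℕ} :
    (rowsOutside m k i).biUnion id = (range m \ Ico i (i + k)) ×ˢ range k := by
  ext ⟨a, b⟩
  simp [rowsOutside]

lemma isTiling'_union_rowsOutside {i : ℕ} {B : Finset (Finset (ℕ × ℕ))} (hik : i + k ≤ m)
    (hB : ∀ t ∈ B, IsHTile k t ∨ IsVTile k t ∨ IsSqTile k t)
    (hBd : (B : Set (Finset (ℕ × ℕ))).PairwiseDisjoint id) (hBc : B.biUnion id = block k i) :
    IsTiling' m k k (B ∪ rowsOutside m k i) := by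
  refine ⟨?_, ?_, ?_⟩
  · simp only [mem_union, rowsOutside, mem_image]
    rintro t (ht | ⟨x, -, rfl⟩)
    · exact hB t ht
    · exact Or.inl (isHTile_row x)
  · rw [coe_union]
    refine hBd.union (pairwiseDisjoint_image_row _) fun t ht _ hs _ => ?_
    simp only [rowsOutside, mem_coe, mem_image, mem_sdiff, mem_Ico] at hs
    obtain ⟨x, hx, rfl⟩ := hs
    have htB : t ⊆ block k i := hBc ▸ subset_biUnion_of_mem id (mem_coe.mp ht)
    refine disjoint_of_subset_left htB (disjoint_left.2 fun c hc hc' => ?_)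
    simp only [id_eq, mem_block, mem_row] at hc hc'
    omega
  · rw [union_biUnion, hBc, biUnion_rowsOutside]
    ext ⟨a, b⟩
    simp only [mem_union, mem_block, mem_product, mem_sdiff, mem_range, mem_Ico, mem_grid]
    omega

lemma isTiling'_rowTiling (hkm : k ≤ m) : IsTiling' m k k (rowTiling m k) := by
  have hsplit : rowTiling m k = (range k).image (row k) ∪ rowsOutside m k 0 := by
    rw [rowTiling, rowsOutside, ← image_union]
    congr 1
    ext x
    simp only [mem_range, mem_union, mem_sdiff, mem_Ico]
    omega
  rw [hsplit]
  refine isTiling'_union_rowsOutside (by omega) ?_ (pairwiseDisjoint_image_row _) ?_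
  · simp only [mem_image]
    rintro _ ⟨x, -, rfl⟩
    exact Or.inl (isHTile_row x)
  · ext ⟨a, b⟩
    simp

lemma isTiling'_squareTiling {i : ℕ} (hik : i + k ≤ m) :
    IsTiling' m k k (squareTiling m k i) :=
  isTiling'_union_rowsOutside hik (by simp [isSqTile_block]) (by simp) (by simp)

lemma isTiling'_columnTiling {i : ℕ} (hik : i + k ≤ m) :
    IsTiling' m k k (columnTiling m k i) := by
  refine isTiling'_union_rowsOutside hik ?_ (pairwiseDisjoint_image_column _ i) ?_
  · simp only [mem_image]
    rintro _ ⟨j, -, rfl⟩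
    exact Or.inr (Or.inl (isVTile_column i j))
  · ext ⟨a, b⟩
    simp [and_comm (a := b < k), and_assoc]

lemma pivot_mem_of_ne_row (hk : 0 < k) (h2 : m < 2 * k) (hT : IsTiling' m k k T)
    {t : Finset (ℕ × ℕ)} (ht : t ∈ T) {x : ℕ} (hx : (x, 0) ∈ t) (hne : t ≠ row k x) :
    (m - k, 0) ∈ t := by
  rcases tile_cases hk hT ht with ⟨y, -, rfl⟩ | ⟨i, j, hik, -, rfl⟩ | ⟨i, hik, rfl⟩
  · exact absurd ((mem_row.1 hx).1 ▸ rfl) hne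
  · obtain ⟨-, -, rfl⟩ := mem_column.1 hx
    exact mem_column.2 ⟨by omega, by omega, rfl⟩
  · exact mem_block.2 ⟨by omega, by omega, hk⟩

lemma row_mem_of_not_mem (hk : 0 < k) (h2 : m < 2 * k) (hT : IsTiling' m k k T)
    {R : Finset (ℕ × ℕ)} (hR : R ∈ T) (hpR : (m - k, 0) ∈ R) {x : ℕ} (hx : x < m)
    (hxR : (x, 0) ∉ R) : row k x ∈ T := by
  obtain ⟨t, ht, hxt⟩ := hT.exists_mem (c := (x, 0)) (mem_grid.2 ⟨hx, hk⟩)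
  by_contra hrow
  have hne : t ≠ row k x := by rintro rfl; exact hrow ht
  have htR := hT.eq_of_mem ht hR (pivot_mem_of_ne_row hk h2 hT ht hxt hne) hpR
  exact hxR (htR ▸ hxt)

lemma exists_row_mem (hk : 0 < k) (h1 : k < m) (h2 : m < 2 * k) (hT : IsTiling' m k k T) :
    ∃ x < m, row k x ∈ T := by
  obtain ⟨R, hR, hpR⟩ := hT.exists_mem (c := (m - k, 0)) (mem_grid.2 ⟨by omega, hk⟩)
  have hshort : (0, 0) ∉ R ∨ (m - 1, 0) ∉ R := by
    rcases tile_cases hk hT hR with ⟨y, -, rfl⟩ | ⟨i, j, -, -, rfl⟩ | ⟨i, -, rfl⟩ <;>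
      simp only [mem_row, mem_column, mem_block] at hpR ⊢ <;> omega
  rcases hshort with h | h
  · exact ⟨0, by omega, row_mem_of_not_mem hk h2 hT hR hpR (by omega) h⟩
  · exact ⟨m - 1, by omega, row_mem_of_not_mem hk h2 hT hR hpR (by omega) h⟩

lemma faultFree_of_row_mem {x : ℕ} (hrow : row k x ∈ T) : FaultFree k T := by
  intro a ha hak hfault
  rcases hfault _ hrow with h | h
  · exact absurd (h (x, k - 1) (mem_row.2 ⟨rfl, by omega⟩)) (show ¬k - 1 < a by omega)
  · exact absurd (h (x, 0) (mem_row.2 ⟨rfl, by omega⟩)) (show ¬a ≤ 0 by omega)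

lemma faultFree_of_isTiling' (hk : 0 < k) (h1 : k < m) (h2 : m < 2 * k)
    (hT : IsTiling' m k k T) : FaultFree k T :=
  let ⟨_, _, hrow⟩ := exists_row_mem hk h1 h2 hT
  faultFree_of_row_mem hrow

lemma column_mem_of_column_mem (hk : 2 ≤ k) (h2 : m < 2 * k) (hT : IsTiling' m k k T) {i : ℕ}
    (hR : column k i 0 ∈ T) (hik : i + k ≤ m) {j : ℕ} (hj : j < k) :
    column k i j ∈ T := by
  have hpR : (m - k, 0) ∈ column k i 0 := mem_column.2 ⟨by omega, by omega, rfl⟩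
  obtain ⟨t, ht, hct⟩ := hT.exists_mem (c := (m - k, j)) (mem_grid.2 ⟨by omega, hj⟩)
  rcases tile_cases (by omega) hT ht with
    ⟨y, -, rfl⟩ | ⟨i', j', hik', -, rfl⟩ | ⟨i', hik', rfl⟩
  · obtain rfl : m - k = y := (mem_row.1 hct).1
    have hpt : (m - k, 0) ∈ row k (m - k) := mem_row.2 ⟨rfl, by omega⟩
    exact absurd (hT.eq_of_mem ht hR hpt hpR) (row_ne_column hk _ _ _)
  · obtain ⟨-, -, rfl⟩ := mem_column.1 hct
    obtain rfl : i = i' := by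
      by_contra hne
      obtain ⟨x, hx, hxR, hxt⟩ :
          ∃ x < m, (x, 0) ∉ column k i 0 ∧ (x, j) ∈ column k i' j := by
        rcases Nat.lt_or_gt_of_ne hne with h | h
        · refine ⟨i' + k - 1, by omega, ?_, mem_column.2 ⟨by omega, by omega, rfl⟩⟩
          exact fun hx => by have := (mem_column.1 hx).2.1; omega
        · refine ⟨i', by omega, ?_, mem_column.2 ⟨le_rfl, by omega, rfl⟩⟩
          exact fun hx => by have := (mem_column.1 hx).1; omega
      have hrow := row_mem_of_not_mem (by omega) h2 hT hR hpR hx hxR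
      exact row_ne_column hk _ _ _ (hT.eq_of_mem hrow ht (mem_row.2 ⟨rfl, hj⟩) hxt)
    exact ht
  · have hpt : (m - k, 0) ∈ block k i' := mem_block.2 ⟨by omega, by omega, by omega⟩
    exact absurd (hT.eq_of_mem ht hR hpt hpR) (block_ne_column hk _ _ _)

abbrev TilingIndex (m k : ℕ) : Type := Option (Fin (m - k + 1) ⊕ Fin (m - k + 1))

def tiling (m k : ℕ) : TilingIndex m k → Finset (Finset (ℕ × ℕ))
  | none => rowTiling m k
  | some (.inl i) => squareTiling m k i
  | some (.inr i) => columnTiling m k i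

def pivotTile (m k : ℕ) : TilingIndex m k → Finset (ℕ × ℕ)
  | none => row k (m - k)
  | some (.inl i) => block k i
  | some (.inr i) => column k i 0

lemma isTiling'_tiling (hkm : k ≤ m) : ∀ c, IsTiling' m k k (tiling m k c)
  | none => isTiling'_rowTiling hkm
  | some (.inl i) => isTiling'_squareTiling (by omega)
  | some (.inr i) => isTiling'_columnTiling (by omega)

lemma pivotTile_mem_tiling (hk : 0 < k) (hkm : k ≤ m) :
    ∀ c, pivotTile m k c ∈ tiling m k c
  | none => mem_image_of_mem _ (mem_range.2 (by omega))
  | some (.inl _) => mem_union_left _ (mem_singleton_self _)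
  | some (.inr _) => mem_union_left _ (mem_image_of_mem _ (mem_range.2 hk))

lemma pivot_mem_pivotTile (hk : 0 < k) (h2 : m < 2 * k) :
    ∀ c, (m - k, 0) ∈ pivotTile m k c
  | none => mem_row.2 ⟨rfl, hk⟩
  | some (.inl i) => mem_block.2 ⟨by omega, by omega, hk⟩
  | some (.inr i) => mem_column.2 ⟨by omega, by omega, rfl⟩

lemma pivotTile_injective (hk : 2 ≤ k) : Function.Injective (pivotTile m k) := by
  rintro (_ | i | i) (_ | i' | i') h <;> simp only [pivotTile] at h
  · rfl
  · exact absurd h (row_ne_block hk _ _)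
  · exact absurd h (row_ne_column hk _ _ _)
  · exact absurd h.symm (row_ne_block hk _ _)
  · rw [Fin.ext (block_injective (by omega) h)]
  · exact absurd h (block_ne_column hk _ _ _)
  · exact absurd h.symm (row_ne_column hk _ _ _)
  · exact absurd h.symm (block_ne_column hk _ _ _)
  · rw [Fin.ext (column_injective (by omega) 0 h)]

lemma tiling_injective (hk : 2 ≤ k) (hkm : k ≤ m) (h2 : m < 2 * k) :
    Function.Injective (tiling m k) := by
  intro c c' h
  have hc := pivotTile_mem_tiling (by omega) hkm c
  have hc' := pivotTile_mem_tiling (by omega) hkm c'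
  rw [← h] at hc'
  exact pivotTile_injective hk <| (isTiling'_tiling hkm c).eq_of_mem hc hc'
    (pivot_mem_pivotTile (by omega) h2 c) (pivot_mem_pivotTile (by omega) h2 c')

lemma exists_tiling_eq (hk : 2 ≤ k) (h1 : k < m) (h2 : m < 2 * k) (hT : IsTiling' m k k T) :
    ∃ c, tiling m k c = T := by
  obtain ⟨R, hR, hpR⟩ := hT.exists_mem (c := (m - k, 0)) (mem_grid.2 ⟨by omega, by omega⟩)
  have hrow {x : ℕ} (hx : x < m) (hxR : (x, 0) ∉ R) : row k x ∈ T :=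
    row_mem_of_not_mem (by omega) h2 hT hR hpR hx hxR
  have hrowsOutside {i : ℕ} (hR0 : ∀ x, (x, 0) ∈ R → i ≤ x ∧ x < i + k) :
      rowsOutside m k i ⊆ T := by
    simp only [rowsOutside, image_subset_iff, mem_sdiff, mem_range, mem_Ico]
    exact fun x hx => hrow hx.1 fun hxR => hx.2 (hR0 x hxR)
  rcases tile_cases (by omega) hT hR with
    ⟨y, -, rfl⟩ | ⟨i, j, hik, -, rfl⟩ | ⟨i, hik, rfl⟩
  · obtain rfl : m - k = y := (mem_row.1 hpR).1
    refine ⟨none, (isTiling'_rowTiling h1.le).eq_of_subset (by omega) hT ?_⟩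
    simp only [tiling, rowTiling, image_subset_iff, mem_range]
    intro x hx
    by_cases hxR : x = m - k
    · exact hxR ▸ hR
    · exact hrow hx fun h => hxR (mem_row.1 h).1
  · obtain ⟨-, -, rfl⟩ := mem_column.1 hpR
    refine ⟨some (.inr ⟨i, by omega⟩),
      (isTiling'_columnTiling hik).eq_of_subset (by omega) hT ?_⟩
    refine union_subset ?_ <|
      hrowsOutside (i := i) fun x hx => (mem_column.1 hx).imp_right And.left
    simp only [image_subset_iff, mem_range]
    exact fun j hj => column_mem_of_column_mem hk h2 hT hR hik hj
  · refine ⟨some (.inl ⟨i, by omega⟩),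
      (isTiling'_squareTiling hik).eq_of_subset (by omega) hT ?_⟩
    refine union_subset (singleton_subset_iff.2 hR) ?_
    exact hrowsOutside (i := i) fun x hx => (mem_block.1 hx).imp_right And.left

end KTiling

theorem stmt_15 (k m : ℕ) (hk : 2 ≤ k) (h1 : k < m) (h2 : m < 2 * k) :
    numFFTilings' m k k = 2 * m - 2 * k + 3 := by
  have hclassify (T : Finset (Finset (ℕ × ℕ))) :
      IsTiling' m k k T ∧ FaultFree k T ↔ T ∈ Set.range (KTiling.tiling m k) := by
    refine ⟨fun ⟨hT, _⟩ => KTiling.exists_tiling_eq hk h1 h2 hT, ?_⟩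
    rintro ⟨c, rfl⟩
    have hc := KTiling.isTiling'_tiling h1.le c
    exact ⟨hc, KTiling.faultFree_of_isTiling' (by omega) h1 h2 hc⟩
  rw [numFFTilings', Nat.card_congr (Equiv.subtypeEquivRight hclassify),
    Nat.card_range_of_injective (KTiling.tiling_injective hk h1.le h2), Finite.card_option,
    Nat.card_sum, Nat.card_fin]
  omega
end
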